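/- arXiv:1511.05932 — 8 statements merged into one kernel-verified Lean document; each statement's English description precedes it below -/
import Mathlib

section
/- Let f have L-Lipschitz gradient over a compact convex set D of diameter M, let x ∈ D, let h := f(x) − min_{y∈D} f(y), and let g := max_{s∈D} ⟨−∇f(x), s − x⟩ be the Frank-Wolfe gap at x. Then g ≤ h + L·M²/2 if h > L·M²/2, and g ≤ M·√(2·h·L) otherwise. -/
/-!
Along the segment from `x` towards a Frank–Wolfe vertex `s*`, the descent lemma gives
`f (x + γ (s* - x)) ≤ f x - γ g + γ² L M² / 2`, and since this point lies in `D` its value is at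
least `min f`, so `γ g ≤ h + γ² L M² / 2` for every `γ ∈ [0, 1]`. Taking `γ = 1` gives the first
bound; when `2 h ≤ L M²` the gap satisfies `g ≤ L M²`, so `γ = g / (L M²)` is admissible and yields
`g² ≤ 2 h L M²`.
-/

open Set
open scoped InnerProductSpace

section DescentLemma

variable {E : Type*} [NormedAddCommGroup E] [InnerProductSpace ℝ E] [CompleteSpace E]
  {f : E → ℝ} {f' : E → E} {D : Set E} {L : ℝ}

lemma HasGradientAt.hasDerivAt_comp_add_smul {x v : E} {t : ℝ}
    (hf : HasGradientAt f (f' (x + t • v)) (x + t • v)) :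
    HasDerivAt (fun s : ℝ => f (x + s • v)) ⟪f' (x + t • v), v⟫_ℝ t := by
  have hline : HasDerivAt (fun s : ℝ => x + s • v) v t := by
    simpa using ((hasDerivAt_id t).smul_const v).const_add x
  have hcomp := hf.hasFDerivAt.comp_hasDerivAt t hline
  simp only [InnerProductSpace.toDual_apply_apply] at hcomp
  exact hcomp

lemma Convex.le_add_inner_add_sq_of_lipschitz_gradient (hD : Convex ℝ D)
    (hdiff : ∀ y ∈ D, HasGradientAt f (f' y) y)
    (hlip : ∀ a ∈ D, ∀ b ∈ D, ‖f' a - f' b‖ ≤ L * ‖a - b‖)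
    {x y : E} (hx : x ∈ D) (hy : y ∈ D) :
    f y ≤ f x + ⟪f' x, y - x⟫_ℝ + L / 2 * ‖y - x‖ ^ 2 := by
  set v := y - x
  have hmem : ∀ t ∈ Icc (0 : ℝ) 1, x + t • v ∈ D := fun t ht => hD.add_smul_sub_mem hx hy ht
  set φ : ℝ → ℝ := fun t => f (x + t • v) - t * ⟪f' x, v⟫_ℝ - L / 2 * t ^ 2 * ‖v‖ ^ 2
  have hφ' : ∀ t ∈ Icc (0 : ℝ) 1,
      HasDerivAt φ (⟪f' (x + t • v), v⟫_ℝ - ⟪f' x, v⟫_ℝ - L * t * ‖v‖ ^ 2) t := by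
    intro t ht
    have hquad := ((hasDerivAt_pow 2 t).const_mul (L / 2)).mul_const (‖v‖ ^ 2)
    exact (((hdiff _ (hmem t ht)).hasDerivAt_comp_add_smul.sub
      ((hasDerivAt_id t).mul_const ⟪f' x, v⟫_ℝ)).sub hquad).congr_deriv (by push_cast; ring)
  have hgrowth : ∀ t ∈ Icc (0 : ℝ) 1,
      ⟪f' (x + t • v), v⟫_ℝ - ⟪f' x, v⟫_ℝ ≤ L * t * ‖v‖ ^ 2 := by
    intro t ht
    have hgrad : ‖f' (x + t • v) - f' x‖ ≤ L * (t * ‖v‖) := by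
      simpa [norm_smul, abs_of_nonneg ht.1] using hlip _ (hmem t ht) _ hx
    calc ⟪f' (x + t • v), v⟫_ℝ - ⟪f' x, v⟫_ℝ
        = ⟪f' (x + t • v) - f' x, v⟫_ℝ := (inner_sub_left _ _ _).symm
      _ ≤ ‖f' (x + t • v) - f' x‖ * ‖v‖ := real_inner_le_norm _ _
      _ ≤ L * (t * ‖v‖) * ‖v‖ := mul_le_mul_of_nonneg_right hgrad (norm_nonneg v)
      _ = L * t * ‖v‖ ^ 2 := by ring
  have hanti : AntitoneOn φ (Icc 0 1) := by
    have hint : interior (Icc (0 : ℝ) 1) ⊆ Icc 0 1 := interior_subset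
    exact antitoneOn_of_hasDerivWithinAt_nonpos (convex_Icc 0 1)
      (fun t ht => (hφ' t ht).continuousAt.continuousWithinAt)
      (fun t ht => (hφ' t (hint ht)).hasDerivWithinAt)
      (fun t ht => sub_nonpos.2 (hgrowth t (hint ht)))
  have h01 := hanti (left_mem_Icc.2 zero_le_one) (right_mem_Icc.2 zero_le_one) zero_le_one
  simp only [φ, zero_smul, add_zero, one_smul, add_sub_cancel, v] at h01
  linarith

lemma Convex.apply_add_smul_sub_le_sub_mul_gap (hD : Convex ℝ D)
    (hdiff : ∀ y ∈ D, HasGradientAt f (f' y) y)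
    (hlip : ∀ a ∈ D, ∀ b ∈ D, ‖f' a - f' b‖ ≤ L * ‖a - b‖) (hL : 0 ≤ L)
    {x s : E} {M γ : ℝ} (hx : x ∈ D) (hs : s ∈ D) (hsx : ‖s - x‖ ≤ M) (hγ : γ ∈ Icc 0 1) :
    f (x + γ • (s - x)) ≤ f x - γ * ⟪-f' x, s - x⟫_ℝ + γ ^ 2 * (L * M ^ 2) / 2 := by
  have hdesc := hD.le_add_inner_add_sq_of_lipschitz_gradient hdiff hlip hx
    (hD.add_smul_sub_mem hx hs hγ)
  have hsq : ‖s - x‖ ^ 2 ≤ M ^ 2 := pow_le_pow_left₀ (norm_nonneg _) hsx 2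
  rw [add_sub_cancel_left, inner_smul_right, norm_smul, Real.norm_eq_abs, abs_of_nonneg hγ.1,
    mul_pow] at hdesc
  rw [inner_neg_left]
  nlinarith [mul_le_mul_of_nonneg_left hsq (mul_nonneg hL (sq_nonneg γ))]

end DescentLemma

lemma le_sqrt_of_forall_mul_le_add_sq {g h C : ℝ} (hhC : 2 * h ≤ C)
    (hγ : ∀ γ ∈ Icc (0 : ℝ) 1, γ * g ≤ h + γ ^ 2 * C / 2) : g ≤ √(2 * h * C) := by
  rcases le_or_gt g 0 with hg | hg
  · exact hg.trans (Real.sqrt_nonneg _)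
  have hgC : g ≤ C := by linarith [hγ 1 (right_mem_Icc.2 zero_le_one)]
  have hC : 0 < C := hg.trans_le hgC
  have hopt := hγ (g / C) ⟨(div_pos hg hC).le, (div_le_one hC).2 hgC⟩
  apply Real.le_sqrt_of_sq_le
  field_simp at hopt
  nlinarith

theorem stmt3_general (d : ℕ) (f : EuclideanSpace ℝ (Fin d) → ℝ)
    (f' : EuclideanSpace ℝ (Fin d) → EuclideanSpace ℝ (Fin d))
    (D : Set (EuclideanSpace ℝ (Fin d))) (L M h g : ℝ)
    (hD : Convex ℝ D) (hL : 0 ≤ L)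
    (hM : ∀ a ∈ D, ∀ b ∈ D, ‖a - b‖ ≤ M)
    (hdiff : ∀ y ∈ D, HasGradientAt f (f' y) y)
    (hlip : ∀ a ∈ D, ∀ b ∈ D, ‖f' a - f' b‖ ≤ L * ‖a - b‖)
    (x xstar sstar : EuclideanSpace ℝ (Fin d))
    (hx : x ∈ D) (hmin : ∀ y ∈ D, f xstar ≤ f y)
    (hh : h = f x - f xstar)
    (hss : sstar ∈ D)
    (hg : g = ⟪-f' x, sstar - x⟫_ℝ) :
    (h > L * M ^ 2 / 2 → g ≤ h + L * M ^ 2 / 2) ∧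
      (h ≤ L * M ^ 2 / 2 → g ≤ M * Real.sqrt (2 * h * L)) := by
  have hM0 : 0 ≤ M := (norm_nonneg _).trans (hM x hx x hx)
  have hstep : ∀ γ ∈ Icc (0 : ℝ) 1, γ * g ≤ h + γ ^ 2 * (L * M ^ 2) / 2 := fun γ hγ => by
    have hdesc := hD.apply_add_smul_sub_le_sub_mul_gap hdiff hlip hL hx hss (hM _ hss _ hx) hγ
    have hfloor := hmin _ (hD.add_smul_sub_mem hx hss hγ)
    rw [hh, hg]
    linarith
  refine ⟨fun _ => by simpa using hstep 1 (right_mem_Icc.2 zero_le_one), fun hsmall => ?_⟩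
  calc g ≤ √(2 * h * (L * M ^ 2)) := le_sqrt_of_forall_mul_le_add_sq (by linarith) hstep
    _ = M * √(2 * h * L) := by
      rw [← mul_assoc, Real.sqrt_mul' _ (sq_nonneg M), Real.sqrt_sq hM0, mul_comm]

/-- Bound of the Frank–Wolfe gap `g` in terms of the primal suboptimality `h`:
`g ≤ h + L M²/2` when `h > L M²/2`, and `g ≤ M √(2 h L)` otherwise. -/
theorem stmt3 (d : ℕ) (f : EuclideanSpace ℝ (Fin d) → ℝ)
    (f' : EuclideanSpace ℝ (Fin d) → EuclideanSpace ℝ (Fin d))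
    (D : Set (EuclideanSpace ℝ (Fin d))) (L M h g : ℝ)
    (hD : Convex ℝ D) (hcomp : IsCompact D) (hL : 0 ≤ L)
    (hM : ∀ a ∈ D, ∀ b ∈ D, ‖a - b‖ ≤ M)
    (hdiff : ∀ y ∈ D, HasGradientAt f (f' y) y)
    (hlip : ∀ a ∈ D, ∀ b ∈ D, ‖f' a - f' b‖ ≤ L * ‖a - b‖)
    (x xstar sstar : EuclideanSpace ℝ (Fin d))
    (hx : x ∈ D) (hxs : xstar ∈ D) (hmin : ∀ y ∈ D, f xstar ≤ f y)
    (hh : h = f x - f xstar)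
    (hss : sstar ∈ D) (hgmax : ∀ s ∈ D, ⟪-f' x, s - x⟫_ℝ ≤ ⟪-f' x, sstar - x⟫_ℝ)
    (hg : g = ⟪-f' x, sstar - x⟫_ℝ) :
    (h > L * M ^ 2 / 2 → g ≤ h + L * M ^ 2 / 2) ∧
      (h ≤ L * M ^ 2 / 2 → g ≤ M * Real.sqrt (2 * h * L)) :=
  stmt3_general d f f' D L M h g hD hL hM hdiff hlip x xstar sstar hx hmin hh hss hg
end

section
/- The pyramidal width of the unit cube [0,1]^d in ℝ^d equals 1/√d. In particular, for any point x in the interior of the cube, any unit vector r ∈ ℝ^d, any vertex s of the cube maximizing ⟨r, s⟩, and any finite set S of vertices of the cube such that x is a proper convex combination of the elements of S, one has max_{v ∈ S} ⟨r, s − v⟩ ≥ 1/√d. -/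
/-!
Write `⟪r, s - v⟫ = ∑ j, r j * (s j - v j)`. If the vertex `s` maximizes `⟪r, ·⟫` on the cube,
every term is nonnegative for every vertex `v`. Pick `i` with `‖r‖ ≤ √d * |r i|`. If `r i > 0` then
`x i < 1`, so some vertex `v` of any active set of `x` has `v i = 0` (symmetrically if `r i < 0`),
and the `i`-th term alone is already `|r i|`. On a face `K` exposed by `ℓ`, every coordinate in
which `ℓ` does not vanish is constant, so a feasible direction `r` vanishes there and the vertex
maximizing `⟪r, ·⟫` can be chosen inside `K`. Equality holds for the direction `(1, …, 1)` at the
barycenter of the `d` neighbours of the vertex `(1, …, 1)`.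
-/

open scoped InnerProductSpace

/-- The possible active sets for `x` within the atom set `V`: finite subsets `S ⊆ V` such
that `x` is a proper convex combination (all coefficients strictly positive) of `S`. -/
def activeSets {d : ℕ} (V : Set (EuclideanSpace ℝ (Fin d))) (x : EuclideanSpace ℝ (Fin d)) :
    Set (Finset (EuclideanSpace ℝ (Fin d))) :=
  {S | ↑S ⊆ V ∧ ∃ α : EuclideanSpace ℝ (Fin d) → ℝ,
    (∀ v ∈ S, 0 < α v) ∧ (∑ v ∈ S, α v) = 1 ∧ x = ∑ v ∈ S, α v • v}

/-- The pyramidal directional width of the atom set `V` w.r.t. direction `r` and base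
point `x`: `min` over active sets `S` for `x` of `max_{s ∈ V, v ∈ S} ⟨r/‖r‖, s - v⟩`. -/
noncomputable def PdirW {d : ℕ} (V : Set (EuclideanSpace ℝ (Fin d)))
    (r x : EuclideanSpace ℝ (Fin d)) : ℝ :=
  sInf {w | ∃ S ∈ activeSets V x,
    w = sSup {t | ∃ s ∈ V, ∃ v ∈ (S : Set (EuclideanSpace ℝ (Fin d))),
      t = ⟪‖r‖⁻¹ • r, s - v⟫_ℝ}}

/-- The pyramidal width of a finite atom set `A`: the minimum of the pyramidal directional
width over all faces `K` of `conv(A)`, base points `x ∈ K` and nonzero feasible directions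
`r ∈ cone(K - x)`. -/
noncomputable def PWidth {d : ℕ} (A : Finset (EuclideanSpace ℝ (Fin d))) : ℝ :=
  sInf {w | ∃ K : Set (EuclideanSpace ℝ (Fin d)),
    IsExposed ℝ (convexHull ℝ (↑A : Set (EuclideanSpace ℝ (Fin d)))) K ∧
    ∃ x ∈ K, ∃ r : EuclideanSpace ℝ (Fin d), r ≠ 0 ∧
      (∃ c : ℝ, 0 ≤ c ∧ ∃ y ∈ K, r = c • (y - x)) ∧
      w = PdirW (K ∩ ↑A) r x}

open Classical in
/-- The vertex set `{0,1}^d` of the unit cube, as a finite set of points. -/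
noncomputable def cubeVerts (d : ℕ) : Finset (EuclideanSpace ℝ (Fin d)) :=
  Finset.image
    (fun b : Fin d → Bool =>
      (WithLp.equiv 2 (Fin d → ℝ)).symm (fun i => if b i then 1 else 0))
    Finset.univ

namespace EuclideanSpace

variable {ι : Type*}

lemma exists_apply_le_of_mem_convexHull {S : Set (EuclideanSpace ℝ ι)} {x : EuclideanSpace ℝ ι}
    (hx : x ∈ convexHull ℝ S) (i : ι) : ∃ v ∈ S, v i ≤ x i :=
  ((proj i : StrongDual ℝ _).toLinearMap.concaveOn convex_univ).exists_le_of_mem_convexHull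
    (Set.subset_univ _) hx

lemma exists_le_apply_of_mem_convexHull {S : Set (EuclideanSpace ℝ ι)} {x : EuclideanSpace ℝ ι}
    (hx : x ∈ convexHull ℝ S) (i : ι) : ∃ v ∈ S, x i ≤ v i :=
  ((proj i : StrongDual ℝ _).toLinearMap.convexOn convex_univ).exists_ge_of_mem_convexHull
    (Set.subset_univ _) hx

variable [Fintype ι]

lemma real_inner_eq_sum_mul (x y : EuclideanSpace ℝ ι) : ⟪x, y⟫_ℝ = ∑ i, x i * y i := by
  simp [PiLp.inner_apply, mul_comm]

lemma exists_norm_le_sqrt_card_mul_abs [Nonempty ι] (x : EuclideanSpace ℝ ι) :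
    ∃ i, ‖x‖ ≤ √(Fintype.card ι) * |x i| := by
  obtain ⟨i, hi⟩ := exists_eq_ciSup_of_finite (f := fun i => |x i|)
  refine ⟨i, ?_⟩
  simpa [hi, inner_single_left] using (basisFun ι ℝ).norm_le_card_mul_iSup_norm_inner x

end EuclideanSpace

lemma IsExposed.exists_eq_inner {E : Type*} [NormedAddCommGroup E] [InnerProductSpace ℝ E]
    [CompleteSpace E] {A K : Set E} {x : E} (hK : IsExposed ℝ A K) (hx : x ∈ K) :
    ∃ ℓ : E, K = {z ∈ A | ∀ u ∈ A, ⟪ℓ, u⟫_ℝ ≤ ⟪ℓ, z⟫_ℝ} := by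
  obtain ⟨l, rfl⟩ := hK ⟨x, hx⟩
  exact ⟨(InnerProductSpace.toDual ℝ E).symm l, by simp only [InnerProductSpace.toDual_symm_apply]⟩

section UnitCube

open EuclideanSpace

variable {ι : Type*}

/-- For `z` in the unit cube this says that `z` maximizes `⟪c, ·⟫` on the cube. -/
def IsCoordwiseMax (c z : EuclideanSpace ℝ ι) : Prop :=
  ∀ i, ∀ t ∈ Set.Icc (0 : ℝ) 1, c i * t ≤ c i * z i

lemma exists_isCoordwiseMax_eq_of_apply_eq_zero (r : EuclideanSpace ℝ ι)
    {a : EuclideanSpace ℝ ι} (ha : ∀ j, a j = 0 ∨ a j = 1) :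
    ∃ s : EuclideanSpace ℝ ι, (∀ j, s j = 0 ∨ s j = 1) ∧ IsCoordwiseMax r s ∧
      ∀ j, r j = 0 → s j = a j := by
  refine ⟨WithLp.toLp 2 fun j => if r j = 0 then a j else if 0 < r j then 1 else 0,
    fun j => ?_, fun j u hu => ?_, fun j hj => if_pos hj⟩
  · dsimp only
    split_ifs
    exacts [ha j, Or.inr rfl, Or.inl rfl]
  · obtain ⟨hu0, hu1⟩ := hu
    dsimp only
    split_ifs with h0 h1
    · simp [h0]
    · nlinarith
    · nlinarith

variable [Fintype ι]

lemma isCoordwiseMax_of_forall_inner_le {c z : EuclideanSpace ℝ ι}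
    (hz : ∀ i, z i ∈ Set.Icc (0 : ℝ) 1)
    (hmax : ∀ w : EuclideanSpace ℝ ι, (∀ i, w i = 0 ∨ w i = 1) → ⟪c, w⟫_ℝ ≤ ⟪c, z⟫_ℝ) :
    IsCoordwiseMax c z := by
  intro i t ht
  -- the vertex `s` maximizes each term `c j * s j` separately, so `z` must do so as well
  set s : EuclideanSpace ℝ ι := WithLp.toLp 2 fun j => if 0 < c j then 1 else 0
  have hs : ∀ j, s j = if 0 < c j then 1 else 0 := fun _ => rfl
  have hzs : ∀ j, 0 ≤ c j * s j - c j * z j := by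
    intro j
    obtain ⟨hz0, hz1⟩ := hz j
    rw [hs]
    split_ifs with hc <;> nlinarith
  have hsz : ∑ j, (c j * s j - c j * z j) ≤ 0 := by
    have := hmax s fun j => by rw [hs]; split_ifs <;> simp
    rw [real_inner_eq_sum_mul, real_inner_eq_sum_mul] at this
    rw [Finset.sum_sub_distrib]
    linarith
  have hi := (Finset.single_le_sum (fun j _ => hzs j) (Finset.mem_univ i)).trans hsz
  have hti : c i * t ≤ c i * s i := by
    rw [hs]
    split_ifs with hc <;> nlinarith [ht.1, ht.2]
  linarith

lemma exists_abs_apply_le_inner_sub {r s x : EuclideanSpace ℝ ι} {S : Finset (EuclideanSpace ℝ ι)}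
    (hS : ∀ v ∈ S, ∀ j, v j = 0 ∨ v j = 1) (hs : IsCoordwiseMax r s) (hx : x ∈ convexHull ℝ ↑S)
    (i : ι) (hx1 : 0 < r i → x i < 1) (hx0 : r i < 0 → 0 < x i) :
    ∃ v ∈ S, |r i| ≤ ⟪r, s - v⟫_ℝ := by
  have hterm : ∀ v ∈ S, ∀ j, 0 ≤ r j * (s j - v j) := by
    intro v hv j
    have := hs j (v j) (by rcases hS v hv j with h | h <;> simp [h])
    linarith [mul_sub (r j) (s j) (v j)]
  suffices ∃ v ∈ S, |r i| ≤ r i * (s i - v i) by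
    obtain ⟨v, hv, hvi⟩ := this
    refine ⟨v, hv, hvi.trans ?_⟩
    rw [real_inner_eq_sum_mul]
    exact Finset.single_le_sum (f := fun j => r j * (s j - v j)) (fun j _ => hterm v hv j)
      (Finset.mem_univ i)
  rcases lt_trichotomy (r i) 0 with hneg | hzero | hpos
  · obtain ⟨v, hv, hxv⟩ := exists_le_apply_of_mem_convexHull hx i
    have hvi : v i = 1 := (hS v hv i).resolve_left (by linarith [hx0 hneg])
    have := hs i 0 (by simp)
    refine ⟨v, hv, ?_⟩
    rw [hvi, abs_of_neg hneg]
    linarith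
  · obtain ⟨v, hv⟩ := convexHull_nonempty_iff.1 ⟨x, hx⟩
    exact ⟨v, hv, by simp [hzero]⟩
  · obtain ⟨v, hv, hvx⟩ := exists_apply_le_of_mem_convexHull hx i
    have hvi : v i = 0 := (hS v hv i).resolve_right (by linarith [hx1 hpos])
    have := hs i 1 (by simp)
    refine ⟨v, hv, ?_⟩
    rw [hvi, abs_of_pos hpos]
    linarith

lemma exists_norm_div_sqrt_le_inner_sub [Nonempty ι] {r s x : EuclideanSpace ℝ ι}
    {S : Finset (EuclideanSpace ℝ ι)} (hS : ∀ v ∈ S, ∀ j, v j = 0 ∨ v j = 1)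
    (hs : IsCoordwiseMax r s) (hx : x ∈ convexHull ℝ ↑S)
    (hx1 : ∀ i, 0 < r i → x i < 1) (hx0 : ∀ i, r i < 0 → 0 < x i) :
    ∃ v ∈ S, ‖r‖ / √(Fintype.card ι) ≤ ⟪r, s - v⟫_ℝ := by
  obtain ⟨i, hi⟩ := exists_norm_le_sqrt_card_mul_abs r
  obtain ⟨v, hv, hvi⟩ := exists_abs_apply_le_inner_sub hS hs hx i (hx1 i) (hx0 i)
  refine ⟨v, hv, le_trans ?_ hvi⟩
  rw [div_le_iff₀ (by positivity)]
  linarith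

end UnitCube

section Cube

open EuclideanSpace

variable {d : ℕ}

lemma mem_convexHull_of_mem_activeSets {V : Set (EuclideanSpace ℝ (Fin d))}
    {x : EuclideanSpace ℝ (Fin d)} {S : Finset (EuclideanSpace ℝ (Fin d))}
    (hS : S ∈ activeSets V x) : x ∈ convexHull ℝ ↑S := by
  obtain ⟨-, α, hα0, hα1, hx⟩ := hS
  exact Finset.mem_convexHull'.2 ⟨α, fun v hv => (hα0 v hv).le, hα1, hx.symm⟩

lemma exists_mem_activeSets_of_isExposed {A : Finset (EuclideanSpace ℝ (Fin d))}
    {K : Set (EuclideanSpace ℝ (Fin d))} {x : EuclideanSpace ℝ (Fin d)}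
    (hK : IsExposed ℝ (convexHull ℝ ↑A) K) (hx : x ∈ K) : ∃ S, S ∈ activeSets (K ∩ ↑A) x := by
  obtain ⟨ℓ, rfl⟩ := hK.exists_eq_inner hx
  obtain ⟨hxA, hxmax⟩ := hx
  obtain ⟨w, hw0, hw1, hwx⟩ := Finset.mem_convexHull'.1 hxA
  -- `⟪ℓ, x⟫` is the `w`-average of the values `⟪ℓ, a⟫ ≤ ⟪ℓ, x⟫`, so each `a` of positive weight
  -- attains the maximum
  have hxw : ⟪ℓ, x⟫_ℝ = ∑ a ∈ A, w a * ⟪ℓ, a⟫_ℝ := by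
    simp only [← hwx, inner_sum, real_inner_smul_right]
  have hgap : ∑ a ∈ A, w a * (⟪ℓ, x⟫_ℝ - ⟪ℓ, a⟫_ℝ) = 0 := by
    rw [Finset.sum_congr rfl fun a _ => mul_sub (w a) _ _, Finset.sum_sub_distrib,
      ← Finset.sum_mul, hw1, one_mul, ← hxw, sub_self]
  have hterm := (Finset.sum_eq_zero_iff_of_nonneg fun a ha =>
    mul_nonneg (hw0 a ha) (sub_nonneg.2 (hxmax a (subset_convexHull ℝ _ ha)))).1 hgap
  refine ⟨A.filter (fun a => w a ≠ 0), ?_, w, ?_, ?_, ?_⟩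
  · intro a ha
    obtain ⟨haA, hwa⟩ := Finset.mem_filter.1 ha
    have hxa : ⟪ℓ, x⟫_ℝ = ⟪ℓ, a⟫_ℝ :=
      sub_eq_zero.1 ((mul_eq_zero.1 (hterm a haA)).resolve_left hwa)
    exact ⟨⟨subset_convexHull ℝ _ haA, fun u hu => hxa ▸ hxmax u hu⟩, haA⟩
  · intro a ha
    obtain ⟨haA, hwa⟩ := Finset.mem_filter.1 ha
    exact (hw0 a haA).lt_of_ne' hwa
  · rw [Finset.sum_filter_ne_zero, hw1]
  · rw [Finset.sum_filter_of_ne fun a _ h => left_ne_zero_of_smul h, hwx]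

lemma bddAbove_inner_sub {V : Set (EuclideanSpace ℝ (Fin d))} (hV : V.Finite)
    (S : Finset (EuclideanSpace ℝ (Fin d))) (r : EuclideanSpace ℝ (Fin d)) :
    BddAbove {t | ∃ s ∈ V, ∃ v ∈ (S : Set (EuclideanSpace ℝ (Fin d))),
      t = ⟪‖r‖⁻¹ • r, s - v⟫_ℝ} := by
  refine ((hV.image2 (fun s v => ⟪‖r‖⁻¹ • r, s - v⟫_ℝ) S.finite_toSet).bddAbove).mono ?_
  rintro _ ⟨s, hs, v, hv, rfl⟩
  exact ⟨s, hs, v, hv, rfl⟩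

lemma le_PdirW {V : Set (EuclideanSpace ℝ (Fin d))} {r x : EuclideanSpace ℝ (Fin d)} {b : ℝ}
    (hV : V.Finite) (hne : (activeSets V x).Nonempty)
    (h : ∀ S ∈ activeSets V x, ∃ s ∈ V, ∃ v ∈ S, b ≤ ⟪‖r‖⁻¹ • r, s - v⟫_ℝ) :
    b ≤ PdirW V r x := by
  obtain ⟨S₀, hS₀⟩ := hne
  refine le_csInf ⟨_, S₀, hS₀, rfl⟩ ?_
  rintro _ ⟨S, hS, rfl⟩
  obtain ⟨s, hs, v, hv, hb⟩ := h S hS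
  exact hb.trans (le_csSup (bddAbove_inner_sub hV S r) ⟨s, hs, v, hv, rfl⟩)

lemma PdirW_le {V : Set (EuclideanSpace ℝ (Fin d))} {r x : EuclideanSpace ℝ (Fin d)} {b : ℝ}
    {S : Finset (EuclideanSpace ℝ (Fin d))} (hS : S ∈ activeSets V x)
    (h : ∀ s ∈ V, ∀ v ∈ S, ⟪‖r‖⁻¹ • r, s - v⟫_ℝ ≤ b) : PdirW V r x ≤ b := by
  obtain ⟨v₀, hv₀⟩ := convexHull_nonempty_iff.1 ⟨x, mem_convexHull_of_mem_activeSets hS⟩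
  have hbdd : BddBelow {w | ∃ S ∈ activeSets V x, w = sSup {t | ∃ s ∈ V,
      ∃ v ∈ (S : Set (EuclideanSpace ℝ (Fin d))), t = ⟪‖r‖⁻¹ • r, s - v⟫_ℝ}} := by
    refine ⟨0, ?_⟩
    rintro _ ⟨T, hT, rfl⟩
    obtain ⟨v, hv⟩ := convexHull_nonempty_iff.1 ⟨x, mem_convexHull_of_mem_activeSets hT⟩
    exact Real.sSup_nonneg' ⟨_, ⟨v, hT.1 hv, v, hv, rfl⟩, by simp⟩
  refine (csInf_le hbdd ⟨S, hS, rfl⟩).trans (csSup_le ⟨_, v₀, hS.1 hv₀, v₀, hv₀, rfl⟩ ?_)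
  rintro _ ⟨s, hs, v, hv, rfl⟩
  exact h s hs v hv

lemma mem_cubeVerts {v : EuclideanSpace ℝ (Fin d)} :
    v ∈ cubeVerts d ↔ ∀ i, v i = 0 ∨ v i = 1 := by
  constructor
  · rintro hv i
    obtain ⟨b, -, rfl⟩ := Finset.mem_image.1 hv
    by_cases hb : b i <;> simp [hb]
  · intro hv
    refine Finset.mem_image.2 ⟨fun i => decide (v i = 1), Finset.mem_univ _, PiLp.ext fun i => ?_⟩
    rcases hv i with h | h <;> simp [h]

lemma apply_mem_Icc_of_mem_convexHull_cubeVerts {z : EuclideanSpace ℝ (Fin d)}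
    (hz : z ∈ convexHull ℝ ↑(cubeVerts d)) (i : Fin d) : z i ∈ Set.Icc (0 : ℝ) 1 := by
  obtain ⟨v, hv, hvz⟩ := exists_apply_le_of_mem_convexHull hz i
  obtain ⟨w, hw, hzw⟩ := exists_le_apply_of_mem_convexHull hz i
  constructor
  · rcases mem_cubeVerts.1 hv i with h | h <;> linarith
  · rcases mem_cubeVerts.1 hw i with h | h <;> linarith

lemma isCoordwiseMax_of_isMaxOn {ℓ z : EuclideanSpace ℝ (Fin d)}
    (hz : z ∈ convexHull ℝ ↑(cubeVerts d))
    (hmax : IsMaxOn (fun u => ⟪ℓ, u⟫_ℝ) (convexHull ℝ ↑(cubeVerts d)) z) : IsCoordwiseMax ℓ z :=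
  isCoordwiseMax_of_forall_inner_le (apply_mem_Icc_of_mem_convexHull_cubeVerts hz)
    fun w hw => isMaxOn_iff.1 hmax w (subset_convexHull ℝ _ (mem_cubeVerts.2 hw))

lemma exists_mem_face_isCoordwiseMax {K : Set (EuclideanSpace ℝ (Fin d))}
    {x y a r : EuclideanSpace ℝ (Fin d)} {t : ℝ}
    (hK : IsExposed ℝ (convexHull ℝ ↑(cubeVerts d)) K) (hx : x ∈ K) (hy : y ∈ K)
    (hr : r = t • (y - x)) (ha : a ∈ K ∩ ↑(cubeVerts d)) :
    ∃ s ∈ K ∩ ↑(cubeVerts d), IsCoordwiseMax r s := by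
  obtain ⟨ℓ, rfl⟩ := hK.exists_eq_inner hx
  -- coordinates in which `ℓ` does not vanish are constant on the face
  have hℓ : ∀ j, r j ≠ 0 → ℓ j = 0 := by
    intro j hrj
    by_contra hℓj
    have hxy : ℓ j * y j = ℓ j * x j :=
      le_antisymm (isCoordwiseMax_of_isMaxOn hx.1 (isMaxOn_iff.2 hx.2) j _
          (apply_mem_Icc_of_mem_convexHull_cubeVerts hy.1 j))
        (isCoordwiseMax_of_isMaxOn hy.1 (isMaxOn_iff.2 hy.2) j _
          (apply_mem_Icc_of_mem_convexHull_cubeVerts hx.1 j))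
    exact hrj (by simp [hr, mul_left_cancel₀ hℓj hxy])
  obtain ⟨s, hs01, hs, hsa⟩ := exists_isCoordwiseMax_eq_of_apply_eq_zero r (mem_cubeVerts.1 ha.2)
  have hsv : s ∈ cubeVerts d := mem_cubeVerts.2 hs01
  have hℓs : ⟪ℓ, s⟫_ℝ = ⟪ℓ, a⟫_ℝ := by
    simp only [real_inner_eq_sum_mul]
    refine Finset.sum_congr rfl fun j _ => ?_
    by_cases hrj : r j = 0
    · rw [hsa j hrj]
    · rw [hℓ j hrj, zero_mul, zero_mul]
  exact ⟨s, ⟨⟨subset_convexHull ℝ _ hsv, hℓs ▸ ha.1.2⟩, hsv⟩, hs⟩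

lemma exists_one_div_sqrt_le_inner_sub {K : Set (EuclideanSpace ℝ (Fin d))}
    {x y r : EuclideanSpace ℝ (Fin d)} {t : ℝ} {S : Finset (EuclideanSpace ℝ (Fin d))}
    (hK : IsExposed ℝ (convexHull ℝ ↑(cubeVerts d)) K) (hx : x ∈ K) (hy : y ∈ K)
    (ht : 0 ≤ t) (hry : r = t • (y - x)) (hr : r ≠ 0)
    (hS : S ∈ activeSets (K ∩ ↑(cubeVerts d)) x) :
    ∃ s ∈ K ∩ ↑(cubeVerts d), ∃ v ∈ S, 1 / √d ≤ ⟪‖r‖⁻¹ • r, s - v⟫_ℝ := by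
  have : Nonempty (Fin d) := by
    by_contra h
    have := not_nonempty_iff.1 h
    exact hr (Subsingleton.elim _ _)
  have hxS := mem_convexHull_of_mem_activeSets hS
  obtain ⟨a, ha⟩ := convexHull_nonempty_iff.1 ⟨x, hxS⟩
  obtain ⟨s, hsK, hs⟩ := exists_mem_face_isCoordwiseMax hK hx hy hry (hS.1 ha)
  have hyi := apply_mem_Icc_of_mem_convexHull_cubeVerts (hK.subset hy)
  have hri : ∀ i, r i = t * (y i - x i) := by simp [hry]
  obtain ⟨v, hv, hrv⟩ := exists_norm_div_sqrt_le_inner_sub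
    (fun v hv => mem_cubeVerts.1 (hS.1 hv).2) hs hxS
    (fun i hi => by nlinarith [hri i, (hyi i).2]) (fun i hi => by nlinarith [hri i, (hyi i).1])
  refine ⟨s, hsK, v, hv, ?_⟩
  rw [Fintype.card_fin] at hrv
  calc 1 / √d = ‖r‖⁻¹ * (‖r‖ / √d) := by field_simp [norm_ne_zero_iff.2 hr]
    _ ≤ ‖r‖⁻¹ * ⟪r, s - v⟫_ℝ := by gcongr
    _ = ⟪‖r‖⁻¹ • r, s - v⟫_ℝ := (real_inner_smul_left _ _ _).symm

lemma one_div_sqrt_le_PdirW {K : Set (EuclideanSpace ℝ (Fin d))}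
    {x y r : EuclideanSpace ℝ (Fin d)} {t : ℝ}
    (hK : IsExposed ℝ (convexHull ℝ ↑(cubeVerts d)) K) (hx : x ∈ K) (hy : y ∈ K)
    (ht : 0 ≤ t) (hry : r = t • (y - x)) (hr : r ≠ 0) :
    1 / √d ≤ PdirW (K ∩ ↑(cubeVerts d)) r x :=
  le_PdirW ((cubeVerts d).finite_toSet.subset Set.inter_subset_right)
    (exists_mem_activeSets_of_isExposed hK hx)
    fun _ hS => exists_one_div_sqrt_le_inner_sub hK hx hy ht hry hr hS

lemma inner_one_sub_one_sub_single_le_one {s : EuclideanSpace ℝ (Fin d)} (hs : s ∈ cubeVerts d)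
    (i : Fin d) : ⟪WithLp.toLp 2 1, s - (WithLp.toLp 2 1 - single i 1)⟫_ℝ ≤ 1 := by
  have hs1 : ∑ j, (s j - 1) ≤ 0 :=
    Finset.sum_nonpos fun j _ => by rcases mem_cubeVerts.1 hs j with h | h <;> simp [h]
  calc ⟪WithLp.toLp 2 1, s - (WithLp.toLp 2 1 - single i 1)⟫_ℝ
        = ∑ j, (s j - 1) + ∑ j, if j = i then 1 else 0 := by
        rw [real_inner_eq_sum_mul, ← Finset.sum_add_distrib]
        exact Finset.sum_congr rfl fun j _ => by simp; ring
    _ ≤ 1 := by simp only [Finset.sum_ite_eq', Finset.mem_univ, if_true]; linarith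

lemma exists_PdirW_le_one_div_sqrt (hd : 0 < d) :
    ∃ x ∈ convexHull ℝ (cubeVerts d : Set (EuclideanSpace ℝ (Fin d))),
      ∃ y ∈ convexHull ℝ (cubeVerts d : Set (EuclideanSpace ℝ (Fin d))), ∃ t : ℝ, 0 ≤ t ∧
      t • (y - x) ≠ 0 ∧
      PdirW (convexHull ℝ ↑(cubeVerts d) ∩ ↑(cubeVerts d)) (t • (y - x)) x ≤ 1 / √d := by
  set one : EuclideanSpace ℝ (Fin d) := WithLp.toLp 2 1
  -- the neighbours `f i` of the vertex `one` and their barycenter `x₀`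
  set f : Fin d → EuclideanSpace ℝ (Fin d) := fun i => one - single i 1
  have hf : ∀ i j, f i j = 1 - if j = i then 1 else 0 := fun i j => by simp [f, one]
  have hf_inj : Function.Injective f := fun i k h => by
    by_contra hik
    simpa [hf, hik] using congrArg (fun v : EuclideanSpace ℝ (Fin d) => v i) h
  set S₀ := Finset.univ.image f
  set x₀ := ∑ v ∈ S₀, (d : ℝ)⁻¹ • v
  have hdR : (d : ℝ) ≠ 0 := by positivity
  have hS₀ : S₀ ∈ activeSets (convexHull ℝ ↑(cubeVerts d) ∩ ↑(cubeVerts d)) x₀ := by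
    refine ⟨?_, fun _ => (d : ℝ)⁻¹, fun _ _ => by positivity, ?_, rfl⟩
    · rintro _ hv
      obtain ⟨i, -, rfl⟩ := Finset.mem_image.1 hv
      have hfi : f i ∈ cubeVerts d := mem_cubeVerts.2 fun j => by rw [hf]; split_ifs <;> simp
      exact ⟨subset_convexHull ℝ _ hfi, hfi⟩
    · simp [S₀, Finset.card_image_of_injective _ hf_inj, hdR]
  have hone : (d : ℝ) • (one - x₀) = one := by
    ext j
    simp [x₀, S₀, one, Finset.sum_image fun i _ k _ h => hf_inj h, hf, mul_sub]
    field_simp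
    ring
  have hone_ne : one ≠ 0 := fun h => by
    simpa [one] using congrArg (fun v : EuclideanSpace ℝ (Fin d) => v ⟨0, hd⟩) h
  refine ⟨x₀, convexHull_mono (fun v hv => (hS₀.1 hv).2) (mem_convexHull_of_mem_activeSets hS₀),
    one, subset_convexHull ℝ _ (mem_cubeVerts.2 fun _ => Or.inr rfl), d, by positivity,
    by rwa [hone], ?_⟩
  rw [hone]
  refine PdirW_le hS₀ fun s hs v hv => ?_
  obtain ⟨i, -, rfl⟩ := Finset.mem_image.1 hv
  have hnorm : ‖one‖ = √d := by simp [EuclideanSpace.norm_eq, one]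
  rw [real_inner_smul_left, hnorm, one_div]
  exact mul_le_of_le_one_right (by positivity) (inner_one_sub_one_sub_single_le_one hs.2 i)

end Cube

/-- The pyramidal width of the unit cube `[0,1]^d` equals `1/√d`. In particular, for any
interior point `x` of the cube, unit direction `r`, vertex `s` maximizing `⟨r, ·⟩` over
vertices, and active vertex set `S` for `x`, one has `max_{v ∈ S} ⟨r, s - v⟩ ≥ 1/√d`. -/
theorem stmt6 (d : ℕ) (hd : 0 < d) :
    PWidth (cubeVerts d) = 1 / Real.sqrt d ∧
    ∀ (x r s : EuclideanSpace ℝ (Fin d)), (∀ i, 0 < x i ∧ x i < 1) → ‖r‖ = 1 →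
      (∀ i, s i = 0 ∨ s i = 1) →
      (∀ w : EuclideanSpace ℝ (Fin d), (∀ i, w i = 0 ∨ w i = 1) → ⟪r, w⟫_ℝ ≤ ⟪r, s⟫_ℝ) →
      ∀ S : Finset (EuclideanSpace ℝ (Fin d)), (∀ v ∈ S, ∀ i, v i = 0 ∨ v i = 1) →
      ∀ α : EuclideanSpace ℝ (Fin d) → ℝ, (∀ v ∈ S, 0 < α v) → (∑ v ∈ S, α v) = 1 →
      x = ∑ v ∈ S, α v • v →
      ∃ v ∈ S, 1 / Real.sqrt d ≤ ⟪r, s - v⟫_ℝ := by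
  constructor
  · obtain ⟨x, hx, y, hy, t, ht, hr, hle⟩ := exists_PdirW_le_one_div_sqrt hd
    refine IsLeast.csInf_eq ⟨⟨_, .refl _, x, hx, _, hr, ⟨t, ht, y, hy, rfl⟩, ?_⟩, ?_⟩
    · exact (hle.antisymm (one_div_sqrt_le_PdirW (.refl _) hx hy ht rfl hr)).symm
    · rintro _ ⟨K, hK, x, hx, r, hr, ⟨t, ht, y, hy, hry⟩, rfl⟩
      exact one_div_sqrt_le_PdirW hK hx hy ht hry hr
  · intro x r s hx hr hs hmax S hS α hα0 hα1 hxS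
    have : Nonempty (Fin d) := ⟨⟨0, hd⟩⟩
    obtain ⟨v, hv, hrv⟩ := exists_norm_div_sqrt_le_inner_sub hS
      (isCoordwiseMax_of_forall_inner_le (fun i => by rcases hs i with h | h <;> simp [h]) hmax)
      (mem_convexHull_of_mem_activeSets (V := ↑S) ⟨subset_rfl, α, hα0, hα1, hxS⟩)
      (fun i _ => (hx i).2) (fun i _ => (hx i).1)
    exact ⟨v, hv, by simpa [hr] using hrv⟩
end

section
/- Let x be an interior point of the unit cube [0,1]^d, let r ∈ ℝ^d be a unit vector with all coordinates nonpositive, and let S be a set of vertices of the cube such that x is a proper convex combination of the elements of S. Then max_{v ∈ S} ⟨r, 0 − v⟩ ≥ ‖r‖_∞ ≥ 1/√d. -/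
open scoped InnerProductSpace

namespace EuclideanSpace

variable {ι : Type*}

theorem norm_le_sqrt_card_mul_abs_apply [Fintype ι] {r : EuclideanSpace ℝ ι} {i : ι}
    (hi : ∀ j, |r j| ≤ |r i|) : ‖r‖ ≤ √(Fintype.card ι) * |r i| := by
  have : Nonempty ι := ⟨i⟩
  calc ‖r‖ ≤ √(Fintype.card ι) * ⨆ j, ‖⟪basisFun ι ℝ j, r⟫_ℝ‖ :=
        (basisFun ι ℝ).norm_le_card_mul_iSup_norm_inner r
    _ ≤ √(Fintype.card ι) * |r i| := by
        gcongr
        exact ciSup_le fun j => by simpa using hi j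

theorem exists_apply_ne_zero_of_sum_smul_apply_ne_zero {S : Finset (EuclideanSpace ℝ ι)}
    {α : EuclideanSpace ℝ ι → ℝ} {i : ι} (hx : (∑ v ∈ S, α v • v) i ≠ 0) :
    ∃ v ∈ S, v i ≠ 0 := by
  simp only [WithLp.ofLp_sum, WithLp.ofLp_smul, Finset.sum_apply, Pi.smul_apply,
    smul_eq_mul] at hx
  obtain ⟨v, hvS, hv⟩ := Finset.exists_ne_zero_of_sum_ne_zero hx
  exact ⟨v, hvS, right_ne_zero_of_mul hv⟩

theorem neg_apply_mul_apply_le_inner_zero_sub [Fintype ι] {r v : EuclideanSpace ℝ ι}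
    (hr : ∀ j, r j ≤ 0) (hv : ∀ j, 0 ≤ v j) (i : ι) : -r i * v i ≤ ⟪r, 0 - v⟫_ℝ := by
  have hinner : ⟪r, 0 - v⟫_ℝ = ∑ j, -r j * v j := by
    simp [PiLp.inner_apply, mul_comm]
  rw [hinner]
  exact Finset.single_le_sum (f := fun j => -r j * v j)
    (fun j _ => mul_nonneg (neg_nonneg.2 (hr j)) (hv j)) (Finset.mem_univ i)

end EuclideanSpace

open EuclideanSpace in
theorem stmt7_general (d : ℕ) (x r : EuclideanSpace ℝ (Fin d))
    (hx : ∀ i, 0 < x i ∧ x i < 1) (hr : ‖r‖ = 1) (hrneg : ∀ i, r i ≤ 0)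
    (S : Finset (EuclideanSpace ℝ (Fin d))) (hSv : ∀ v ∈ S, ∀ i, v i = 0 ∨ v i = 1)
    (α : EuclideanSpace ℝ (Fin d) → ℝ) (hxcomb : x = ∑ v ∈ S, α v • v) :
    (∃ v ∈ S, ∀ i, |r i| ≤ ⟪r, (0 : EuclideanSpace ℝ (Fin d)) - v⟫_ℝ) ∧
      ∃ i : Fin d, 1 / Real.sqrt d ≤ |r i| := by
  have : Nonempty (Fin d) := by
    rcases isEmpty_or_nonempty (Fin d) with h | h
    · simp [Subsingleton.elim r 0] at hr
    · exact h
  obtain ⟨i₀, hi₀⟩ := Finite.exists_max fun i => |r i|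
  -- Since `x i₀ > 0`, some vertex of `S` has coordinate `1` at `i₀`.
  obtain ⟨v, hvS, hvi₀⟩ :=
    exists_apply_ne_zero_of_sum_smul_apply_ne_zero (hxcomb ▸ (hx i₀).1.ne')
  have hv_nonneg : ∀ j, 0 ≤ v j := fun j => by rcases hSv v hvS j with h | h <;> simp [h]
  refine ⟨⟨v, hvS, fun i => ?_⟩, i₀, ?_⟩
  · calc |r i| ≤ |r i₀| := hi₀ i
      _ = -r i₀ * v i₀ := by
        rw [(hSv v hvS i₀).resolve_left hvi₀, abs_of_nonpos (hrneg i₀), mul_one]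
      _ ≤ _ := neg_apply_mul_apply_le_inner_zero_sub hrneg hv_nonneg i₀
  · have hnorm := norm_le_sqrt_card_mul_abs_apply hi₀
    rw [hr, Fintype.card_fin] at hnorm
    rw [div_le_iff₀' (Real.sqrt_pos.2 (Nat.cast_pos.2 (Fin.pos_iff_nonempty.2 ‹_›)))]
    exact hnorm

/-- For an interior point `x` of the unit cube, a unit vector `r` with nonpositive
coordinates (so `s = 0` is a maximizing vertex), and an active vertex set `S` for `x`:
`max_{v ∈ S} ⟨r, 0 - v⟩ ≥ ‖r‖_∞ ≥ 1/√d`, expressed as: some `v ∈ S` satisfies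
`⟨r, 0 - v⟩ ≥ |r_i|` for all `i`, and some coordinate satisfies `|r_i| ≥ 1/√d`. -/
theorem stmt7 (d : ℕ) (hd : 0 < d) (x r : EuclideanSpace ℝ (Fin d))
    (hx : ∀ i, 0 < x i ∧ x i < 1) (hr : ‖r‖ = 1) (hrneg : ∀ i, r i ≤ 0)
    (S : Finset (EuclideanSpace ℝ (Fin d))) (hSv : ∀ v ∈ S, ∀ i, v i = 0 ∨ v i = 1)
    (α : EuclideanSpace ℝ (Fin d) → ℝ) (hαpos : ∀ v ∈ S, 0 < α v)
    (hαsum : (∑ v ∈ S, α v) = 1) (hxcomb : x = ∑ v ∈ S, α v • v) :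
    (∃ v ∈ S, ∀ i, |r i| ≤ ⟪r, (0 : EuclideanSpace ℝ (Fin d)) - v⟫_ℝ) ∧
      ∃ i : Fin d, 1 / Real.sqrt d ≤ |r i| :=
  stmt7_general d x r hx hr hrneg S hSv α hxcomb
end

section
/- For the probability simplex on d vertices with d odd, the direction r with r_i = 2/(d−1) for 1 ≤ i ≤ (d−1)/2 and r_i = −2/(d+1) for i ≥ (d+1)/2 satisfies Σ_i r_i = 0, ‖r‖² = 4d/(d²−1), and max_{s,v ∈ {e_1,...,e_d}} ⟨r/‖r‖, s − v⟩ = 2/√(d − 1/d). -/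
open scoped InnerProductSpace

/-!
Write `d = 2m + 1`, so that `r` takes the value `a = 1/m` on `m` coordinates and `b = -1/(m+1)`
on the other `m + 1`; hence `Σ rᵢ = m a + (m + 1) b = 0`. Since `⟨r, eᵢ - eⱼ⟩ = rᵢ - rⱼ`, the
maximum over pairs of vertices is `a - b = 1/m + 1/(m+1)`, which is also `m a² + (m + 1) b² = ‖r‖²`.
So after normalising, the maximum is `‖r‖ = √(4d/(d²-1)) = 2/√(d - 1/d)`.
-/

open Finset

theorem Fin.sum_ite_val_lt {M : Type*} [AddCommMonoid M] {n : ℕ} (m : ℕ) (a b : M) :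
    ∑ i : Fin n, (if (i : ℕ) < m then a else b) = min n m • a + (n - m) • b := by
  have hcompl : #{i : Fin n | ¬ (i : ℕ) < m} = n - m := by
    have := card_filter_add_card_filter_not (s := (univ : Finset (Fin n)))
      (fun i : Fin n => (i : ℕ) < m)
    rw [card_univ, Fintype.card_fin, Fin.card_filter_val_lt] at this
    omega
  rw [sum_ite, Finset.sum_const, Finset.sum_const, Fin.card_filter_val_lt, hcompl]

theorem Real.sqrt_four_mul_div_sq_sub_one {x : ℝ} (hx : 1 < x) :
    √(4 * x / (x ^ 2 - 1)) = 2 / √(x - 1 / x) := by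
  have hx0 : 0 < x := by linarith
  rw [show 4 * x / (x ^ 2 - 1) = 2 ^ 2 / (x - 1 / x) by field_simp; norm_num,
    Real.sqrt_div' _ (by rw [sub_nonneg, div_le_iff₀ hx0]; nlinarith),
    Real.sqrt_sq zero_le_two]

namespace EuclideanSpace

variable {ι : Type*} [Fintype ι] [DecidableEq ι]

theorem inner_smul_single_sub_single (c : ℝ) (r : EuclideanSpace ℝ ι) (i j : ι) :
    ⟪c • r, single i (1 : ℝ) - single j 1⟫_ℝ = c * (r i - r j) := by
  simp [inner_sub_right, inner_single_right, mul_sub]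

theorem isGreatest_inner_smul_single_sub_single {c : ℝ} (hc : 0 ≤ c) (r : EuclideanSpace ℝ ι)
    {i₀ j₀ : ι} (hmax : ∀ i, r i ≤ r i₀) (hmin : ∀ j, r j₀ ≤ r j) :
    IsGreatest {t | ∃ i j : ι, t = ⟪c • r, single i (1 : ℝ) - single j 1⟫_ℝ}
      (c * (r i₀ - r j₀)) := by
  refine ⟨⟨i₀, j₀, (inner_smul_single_sub_single c r i₀ j₀).symm⟩, ?_⟩
  rintro t ⟨i, j, rfl⟩
  rw [inner_smul_single_sub_single]
  exact mul_le_mul_of_nonneg_left (by linarith [hmax i, hmin j]) hc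

end EuclideanSpace

noncomputable def widthDirection (m : ℕ) : EuclideanSpace ℝ (Fin (2 * m + 1)) :=
  WithLp.toLp 2 fun i ↦ if (i : ℕ) < m then (m : ℝ)⁻¹ else -((m : ℝ) + 1)⁻¹

variable {m : ℕ}

@[simp]
theorem widthDirection_apply (i : Fin (2 * m + 1)) :
    widthDirection m i = if (i : ℕ) < m then (m : ℝ)⁻¹ else -((m : ℝ) + 1)⁻¹ :=
  rfl

theorem widthDirection_zero (hm : 0 < m) : widthDirection m 0 = (m : ℝ)⁻¹ := by
  simp [hm]

theorem widthDirection_last : widthDirection m (Fin.last (2 * m)) = -((m : ℝ) + 1)⁻¹ := by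
  rw [widthDirection_apply, Fin.val_last, if_neg (by omega)]

theorem sum_widthDirection (hm : 0 < m) : ∑ i, widthDirection m i = 0 := by
  simp_rw [widthDirection_apply, Fin.sum_ite_val_lt, nsmul_eq_mul,
    min_eq_right (by omega : m ≤ 2 * m + 1), show 2 * m + 1 - m = m + 1 by omega]
  push_cast
  field_simp
  ring

theorem norm_widthDirection_sq (hm : 0 < m) :
    ‖widthDirection m‖ ^ 2 = (m : ℝ)⁻¹ + ((m : ℝ) + 1)⁻¹ := by
  simp_rw [EuclideanSpace.real_norm_sq_eq, widthDirection_apply, apply_ite (· ^ 2),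
    Fin.sum_ite_val_lt, nsmul_eq_mul, min_eq_right (by omega : m ≤ 2 * m + 1),
    show 2 * m + 1 - m = m + 1 by omega]
  push_cast
  field_simp

theorem widthDirection_le_widthDirection_zero (hm : 0 < m) (i : Fin (2 * m + 1)) :
    widthDirection m i ≤ widthDirection m 0 := by
  rw [widthDirection_zero hm, widthDirection_apply]
  split_ifs
  · rfl
  · exact (neg_nonpos.2 (by positivity)).trans (by positivity)

theorem widthDirection_last_le (j : Fin (2 * m + 1)) :
    widthDirection m (Fin.last (2 * m)) ≤ widthDirection m j := by
  rw [widthDirection_last, widthDirection_apply]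
  split_ifs
  · exact (neg_nonpos.2 (by positivity)).trans (by positivity)
  · rfl

theorem isGreatest_inner_normalize_widthDirection (hm : 0 < m) :
    IsGreatest {t | ∃ i j : Fin (2 * m + 1), t = ⟪‖widthDirection m‖⁻¹ • widthDirection m,
      EuclideanSpace.single i (1 : ℝ) - EuclideanSpace.single j 1⟫_ℝ} ‖widthDirection m‖ := by
  have hwidth : widthDirection m 0 - widthDirection m (Fin.last (2 * m)) =
      ‖widthDirection m‖ ^ 2 := by
    rw [norm_widthDirection_sq hm, widthDirection_zero hm, widthDirection_last, sub_neg_eq_add]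
  have hne : ‖widthDirection m‖ ≠ 0 :=
    sq_pos_iff.1 (by rw [norm_widthDirection_sq hm]; positivity)
  convert EuclideanSpace.isGreatest_inner_smul_single_sub_single
    (inv_nonneg.2 (norm_nonneg _)) _ (widthDirection_le_widthDirection_zero hm)
    widthDirection_last_le using 1
  rw [hwidth, sq, inv_mul_cancel_left₀ hne]

/-- Probability simplex width direction for odd `d`: the direction with `r_i = 2/(d-1)` on
the first `(d-1)/2` coordinates and `r_i = -2/(d+1)` on the rest satisfies `Σ r_i = 0`,
`‖r‖² = 4d/(d²-1)`, and `max_{s,v vertices} ⟨r/‖r‖, s - v⟩ = 2/√(d - 1/d)`. -/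
theorem stmt11 (d : ℕ) (hdodd : Odd d) (hd3 : 3 ≤ d) (r : EuclideanSpace ℝ (Fin d))
    (hr : ∀ i : Fin d, r i =
      if (i : ℕ) < (d - 1) / 2 then 2 / ((d : ℝ) - 1) else -2 / ((d : ℝ) + 1)) :
    (∑ i, r i) = 0 ∧ ‖r‖ ^ 2 = 4 * d / ((d : ℝ) ^ 2 - 1) ∧
    IsGreatest {t | ∃ i j : Fin d,
        t = ⟪‖r‖⁻¹ • r, EuclideanSpace.single i (1 : ℝ) - EuclideanSpace.single j 1⟫_ℝ}
      (2 / Real.sqrt ((d : ℝ) - 1 / d)) := by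
  obtain ⟨m, rfl⟩ := hdodd
  have hm : 0 < m := by omega
  obtain rfl : r = widthDirection m := by
    ext i
    rw [hr, widthDirection_apply, show (2 * m + 1 - 1) / 2 = m by omega]
    push_cast
    congr 1 <;> field_simp <;> ring
  have hnorm_sq : ‖widthDirection m‖ ^ 2 =
      4 * ((2 * m + 1 : ℕ) : ℝ) / (((2 * m + 1 : ℕ) : ℝ) ^ 2 - 1) := by
    rw [norm_widthDirection_sq hm]
    push_cast
    rw [show (2 * (m : ℝ) + 1) ^ 2 - 1 = 4 * (m * (m + 1)) by ring]
    field_simp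
    ring
  have hnorm : ‖widthDirection m‖ = 2 / √(((2 * m + 1 : ℕ) : ℝ) - 1 / ((2 * m + 1 : ℕ) : ℝ)) := by
    rw [← Real.sqrt_four_mul_div_sq_sub_one (by norm_cast; omega), ← hnorm_sq,
      Real.sqrt_sq (norm_nonneg _)]
  exact ⟨sum_widthDirection hm, hnorm_sq,
    hnorm ▸ isGreatest_inner_normalize_widthDirection hm⟩
end

section
/- Let f be μ-strongly convex (with respect to the Euclidean norm) over D = conv(A) for a finite atom set A. Then the geometric strong convexity constant satisfies μ_f^A ≥ μ · PWidth(A)², where PWidth(A) is the pyramidal width of A. -/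
/-!
Strong convexity bounds the Bregman gap `f(x*) - f(x) - ⟨∇f(x), x* - x⟩` below by
`μ/2 ‖x* - x‖²`, so it suffices to show
`PWidth(A) ⟨-∇f(x), x* - x⟩ / ‖x* - x‖ ≤ ⟨∇f(x), v - s⟩` for the away vertex `v` of every active
set of `x` and the Frank-Wolfe vertex `s`.

For this, take the Moreau decomposition `-∇f(x) = r + q` along the cone of feasible directions
at `x`, which is closed because it is finitely generated (conic Carathéodory). The normal part `q`
exposes a face `K` of `conv(A)` containing `x`, hence every active set of `x`, and also the
direction `r`. On `K` the linear forms of `r` and `-∇f(x)` differ by a constant, so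
`PWidth(A) ‖r‖ ≤ max ⟨r, s - v⟩ ≤ ⟨∇f(x), v - s⟩`, while
`⟨-∇f(x), x* - x⟩ ≤ ⟨r, x* - x⟩ ≤ ‖r‖ ‖x* - x‖`.
-/

open scoped InnerProductSpace

/-- The step-size quantity `γ^A(x, x*)` used in the definition of `μ_f^A`. -/
noncomputable def gammaA {d : ℕ}
    (f' : EuclideanSpace ℝ (Fin d) → EuclideanSpace ℝ (Fin d))
    (A : Finset (EuclideanSpace ℝ (Fin d))) (x y : EuclideanSpace ℝ (Fin d)) : ℝ :=
  ⟪-f' x, y - x⟫_ℝ /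
    (sInf {t | ∃ S ∈ activeSets (↑A) x,
        t = sSup {u | ∃ v ∈ (S : Set (EuclideanSpace ℝ (Fin d))), u = ⟪f' x, v⟫_ℝ}} -
      sInf {t | ∃ v ∈ (↑A : Set (EuclideanSpace ℝ (Fin d))), t = ⟪f' x, v⟫_ℝ})

/-- The geometric strong convexity constant `μ_f^A` of `f` over `conv(A)`. -/
noncomputable def mufA {d : ℕ} (f : EuclideanSpace ℝ (Fin d) → ℝ)
    (f' : EuclideanSpace ℝ (Fin d) → EuclideanSpace ℝ (Fin d))
    (A : Finset (EuclideanSpace ℝ (Fin d))) : ℝ :=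
  sInf {c | ∃ x ∈ convexHull ℝ (↑A : Set (EuclideanSpace ℝ (Fin d))),
    ∃ y ∈ convexHull ℝ (↑A : Set (EuclideanSpace ℝ (Fin d))),
      ⟪f' x, y - x⟫_ℝ < 0 ∧
      c = 2 / gammaA f' A x y ^ 2 * (f y - f x - ⟪f' x, y - x⟫_ℝ)}

namespace PointedCone

section Hull

variable {E : Type*} [AddCommGroup E] [Module ℝ E]

theorem mem_hull_finset {s : Finset E} {z : E} :
    z ∈ hull ℝ (s : Set E) ↔ ∃ c : E → ℝ, (∀ y ∈ s, 0 ≤ c y) ∧ ∑ y ∈ s, c y • y = z := by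
  constructor
  · intro hz
    obtain ⟨c, -, rfl⟩ := Submodule.mem_span_finset.1 hz
    exact ⟨fun y => c y, fun y _ => (c y).2, rfl⟩
  · rintro ⟨c, hc, rfl⟩
    exact Submodule.sum_mem _ fun y hy => smul_mem _ (hc y hy) (subset_hull hy)

/-- Conic Carathéodory: subtract a multiple of a linear dependence from a conic combination until
one coefficient vanishes. -/
theorem exists_mem_hull_erase_of_not_linearIndepOn [DecidableEq E] {s : Finset E} {z : E}
    (hs : ¬LinearIndepOn ℝ id (s : Set E)) (hz : z ∈ hull ℝ (s : Set E)) :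
    ∃ a ∈ s, z ∈ hull ℝ (s.erase a : Set E) := by
  obtain ⟨c, hc, rfl⟩ := mem_hull_finset.1 hz
  obtain ⟨l, hl, hlpos⟩ : ∃ l : E → ℝ, ∑ y ∈ s, l y • y = 0 ∧ ∃ y ∈ s, 0 < l y := by
    obtain ⟨l, hl, i, hi, hli⟩ := not_linearIndepOn_finset_iff.1 hs
    rcases hli.lt_or_gt with hneg | hpos
    · exact ⟨-l, by simpa [neg_smul, Finset.sum_neg_distrib] using hl, i, hi, by simpa using hneg⟩
    · exact ⟨l, hl, i, hi, hpos⟩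
  set P := s.filter (fun y => 0 < l y)
  obtain ⟨a, haP, hamin⟩ := P.exists_min_image (fun y => c y / l y)
    (let ⟨y, hy, hly⟩ := hlpos; ⟨y, Finset.mem_filter.2 ⟨hy, hly⟩⟩)
  obtain ⟨has, hla⟩ := Finset.mem_filter.1 haP
  set t := c a / l a
  have ht : 0 ≤ t := div_nonneg (hc a has) hla.le
  have hc' : ∀ y ∈ s, 0 ≤ c y - t * l y := by
    intro y hy
    rcases le_or_gt (l y) 0 with hly | hly
    · nlinarith [hc y hy]
    · have := hamin y (Finset.mem_filter.2 ⟨hy, hly⟩)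
      rw [le_div_iff₀ hly] at this
      linarith
  have hca : c a - t * l a = 0 := by simp only [t, div_mul_cancel₀ _ hla.ne', sub_self]
  refine ⟨a, has, mem_hull_finset.2 ⟨fun y => c y - t * l y,
    fun y hy => hc' y (Finset.mem_of_mem_erase hy), ?_⟩⟩
  rw [Finset.sum_erase _ (by simp only [hca, zero_smul])]
  simp only [sub_smul, mul_smul, Finset.sum_sub_distrib, ← Finset.smul_sum, hl, smul_zero,
    sub_zero]

variable [TopologicalSpace E] [IsTopologicalAddGroup E] [ContinuousSMul ℝ E] [T2Space E]

theorem isClosed_hull_of_linearIndepOn {s : Finset E} (hs : LinearIndepOn ℝ id (s : Set E)) :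
    IsClosed (hull ℝ (s : Set E) : Set E) := by
  set φ := Fintype.linearCombination ℝ (fun y : s => (y : E))
  have hφ : Topology.IsClosedEmbedding φ := LinearMap.isClosedEmbedding_of_injective
    (LinearMap.ker_eq_bot.2 (linearIndependent_iff_injective_fintypeLinearCombination.1 hs))
  have hcone : (hull ℝ (s : Set E) : Set E) = φ '' Set.Ici 0 := by
    ext z
    rw [SetLike.mem_coe, mem_hull_finset]
    constructor
    · rintro ⟨c, hc, rfl⟩
      exact ⟨fun y => c y, fun y => hc y y.2, by
        simp only [φ, Fintype.linearCombination_apply, Finset.univ_eq_attach]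
        exact Finset.sum_attach s (fun y => c y • y)⟩
    · rintro ⟨c, hc, rfl⟩
      classical
      refine ⟨fun y => if hy : y ∈ s then c ⟨y, hy⟩ else 0,
        fun y hy => by simpa [hy] using hc ⟨y, hy⟩, ?_⟩
      rw [← Finset.sum_attach s]
      simp [φ, Fintype.linearCombination_apply]
  rw [hcone]
  exact hφ.isClosedMap _ isClosed_Ici

theorem isClosed_hull_finset (s : Finset E) : IsClosed (hull ℝ (s : Set E) : Set E) := by
  classical
  induction s using Finset.strongInduction with
  | H s ih =>
    by_cases hs : LinearIndepOn ℝ id (s : Set E)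
    · exact isClosed_hull_of_linearIndepOn hs
    · have hunion : (hull ℝ (s : Set E) : Set E) = ⋃ a ∈ s, hull ℝ (s.erase a : Set E) := by
        refine subset_antisymm (fun z hz => ?_) (Set.iUnion₂_subset fun a _ => ?_)
        · obtain ⟨a, ha, hza⟩ := exists_mem_hull_erase_of_not_linearIndepOn hs hz
          exact Set.mem_biUnion ha hza
        · exact Submodule.span_mono (by simp)
      rw [hunion]
      exact isClosed_biUnion_finset fun a ha => ih _ (Finset.erase_ssubset ha)

end Hull

theorem exists_moreau_decomposition {E : Type*} [NormedAddCommGroup E] [InnerProductSpace ℝ E]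
    [CompleteSpace E] (C : PointedCone ℝ E) (hC : IsClosed (C : Set E)) (g : E) :
    ∃ p ∈ C, (∀ z ∈ C, ⟪g - p, z⟫_ℝ ≤ 0) ∧ ⟪g - p, p⟫_ℝ = 0 := by
  obtain ⟨p, hpC, hmin⟩ := exists_norm_eq_iInf_of_complete_convex ⟨0, C.zero_mem⟩
    hC.isComplete C.convex g
  have hvar := (norm_eq_iInf_iff_real_inner_le_zero C.convex hpC).1 hmin
  have horth : ⟪g - p, p⟫_ℝ = 0 := by
    have h2 := hvar _ (C.smul_mem zero_le_two hpC)
    have h0 := hvar 0 C.zero_mem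
    rw [two_smul, add_sub_cancel_right] at h2
    rw [zero_sub, inner_neg_right] at h0
    linarith
  refine ⟨p, hpC, fun z hz => ?_, horth⟩
  have := hvar z hz
  rw [inner_sub_right, horth, sub_zero] at this
  exact this

end PointedCone

section ConvexGeometry

variable {E : Type*} [NormedAddCommGroup E] [InnerProductSpace ℝ E]

/-- For `x ∈ conv A` this is the cone `cone(conv A - x)` of feasible directions at `x`. -/
def feasibleCone (A : Set E) (x : E) : PointedCone ℝ E :=
  PointedCone.hull ℝ ((· - x) '' A)

theorem isClosed_feasibleCone [FiniteDimensional ℝ E] (A : Finset E) (x : E) :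
    IsClosed (feasibleCone (A : Set E) x : Set E) := by
  classical
  simpa [feasibleCone] using PointedCone.isClosed_hull_finset (A.image (· - x))

theorem sub_mem_feasibleCone {A : Set E} {x y : E} (hy : y ∈ convexHull ℝ A) :
    y - x ∈ feasibleCone A x := by
  have hA : A ⊆ (fun w => -x + w) ⁻¹' (feasibleCone A x : Set E) := fun a ha => by
    simpa [neg_add_eq_sub, feasibleCone] using
      PointedCone.subset_hull (Set.mem_image_of_mem (· - x) ha)
  simpa [neg_add_eq_sub] using
    convexHull_min hA ((feasibleCone A x).convex.translate_preimage_right (-x)) hy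

theorem exists_pos_smul_sub_eq_of_mem_feasibleCone {A : Finset E} {x z : E}
    (hz : z ∈ feasibleCone (A : Set E) x) (hz0 : z ≠ 0) :
    ∃ c : ℝ, 0 < c ∧ ∃ y ∈ convexHull ℝ (A : Set E), z = c • (y - x) := by
  classical
  rw [feasibleCone, ← Finset.coe_image, PointedCone.mem_hull_finset] at hz
  obtain ⟨w, hw, rfl⟩ := hz
  rw [Finset.sum_image fun a _ b _ h => sub_left_injective h] at hz0 ⊢
  set c : E → ℝ := fun a => w (a - x)
  have hc : ∀ a ∈ A, 0 ≤ c a := fun a ha => hw _ (Finset.mem_image_of_mem _ ha)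
  have hsum : 0 < ∑ a ∈ A, c a := by
    refine (Finset.sum_nonneg hc).lt_of_ne fun h => hz0 (Finset.sum_eq_zero fun a ha => ?_)
    simp [(Finset.sum_eq_zero_iff_of_nonneg hc).1 h.symm a ha, c]
  refine ⟨∑ a ∈ A, c a, hsum, A.centerMass c id,
    A.centerMass_mem_convexHull hc hsum fun a ha => ha, ?_⟩
  rw [Finset.centerMass, smul_sub, smul_inv_smul₀ hsum.ne', Finset.sum_smul,
    ← Finset.sum_sub_distrib]
  simp only [id, smul_sub, c]

theorem mem_toExposed_innerSL_iff {D : Set E} {q x z : E} (hx : x ∈ D)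
    (hq : ∀ w ∈ D, ⟪q, w - x⟫_ℝ ≤ 0) :
    z ∈ (innerSL ℝ q).toExposed D ↔ z ∈ D ∧ ⟪q, z - x⟫_ℝ = 0 := by
  simp only [ContinuousLinearMap.toExposed, Set.mem_ofPred_eq, innerSL_apply_apply]
  constructor
  · rintro ⟨hz, hmax⟩
    have := hmax x hx
    exact ⟨hz, le_antisymm (hq z hz) (by rw [inner_sub_right]; linarith)⟩
  · rintro ⟨hz, hzx⟩
    refine ⟨hz, fun w hw => ?_⟩
    have := hq w hw
    rw [inner_sub_right] at this hzx
    linarith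

theorem Set.Subsingleton.of_stronglyConvex_of_inner_nonneg {s : Set E} {f : E → ℝ} {f' : E → E}
    {μ : ℝ} (hμ : 0 < μ)
    (hsc : ∀ x ∈ s, ∀ y ∈ s, f y ≥ f x + ⟪f' x, y - x⟫_ℝ + μ / 2 * ‖y - x‖ ^ 2)
    (hf' : ∀ x ∈ s, ∀ y ∈ s, 0 ≤ ⟪f' x, y - x⟫_ℝ) : s.Subsingleton := by
  intro x hx y hy
  have hxy := hsc x hx y hy
  have hyx := hsc y hy x hx
  have := hf' x hx y hy
  have := hf' y hy x hx
  rw [norm_sub_rev] at hyx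
  have : ‖y - x‖ ^ 2 = 0 := le_antisymm (by nlinarith) (sq_nonneg _)
  exact (sub_eq_zero.1 (norm_eq_zero.1 (pow_eq_zero_iff two_ne_zero |>.1 this))).symm

end ConvexGeometry

theorem Set.Finite.apply_le_sSup {α : Type*} {s : Set α} (hs : s.Finite) (F : α → ℝ) {a : α}
    (ha : a ∈ s) : F a ≤ sSup {u | ∃ v ∈ s, u = F v} :=
  le_csSup ((hs.image F).bddAbove.mono <| by rintro _ ⟨v, hv, rfl⟩; exact ⟨v, hv, rfl⟩)
    ⟨a, ha, rfl⟩

theorem Set.Finite.sInf_le_apply {α : Type*} {s : Set α} (hs : s.Finite) (F : α → ℝ) {a : α}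
    (ha : a ∈ s) : sInf {u | ∃ v ∈ s, u = F v} ≤ F a :=
  csInf_le ((hs.image F).bddBelow.mono <| by rintro _ ⟨v, hv, rfl⟩; exact ⟨v, hv, rfl⟩)
    ⟨a, ha, rfl⟩

theorem mul_sq_le_two_div_sq_mul {μ w N L D Δ : ℝ} (hμ : 0 ≤ μ) (hw : 0 ≤ w) (hN : 0 < N)
    (hL : 0 < L) (hwD : w * (N / L) ≤ D) (hΔ : μ / 2 * L ^ 2 ≤ Δ) :
    μ * w ^ 2 ≤ 2 / (N / D) ^ 2 * Δ := by
  have hwL : w * N ≤ D * L := by rwa [mul_div_assoc', div_le_iff₀ hL] at hwD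
  have hsq : (w * N) ^ 2 ≤ (D * L) ^ 2 := pow_le_pow_left₀ (by positivity) hwL 2
  rw [div_pow, div_div_eq_mul_div, div_mul_eq_mul_div, le_div_iff₀ (by positivity)]
  nlinarith [mul_le_mul_of_nonneg_left hΔ (sq_nonneg D), mul_le_mul_of_nonneg_left hsq hμ]

section Polytope

variable {d : ℕ}

local notation "𝔼" => EuclideanSpace ℝ (Fin d)

theorem nonempty_of_mem_activeSets {V : Set 𝔼} {x : 𝔼} {S : Finset 𝔼}
    (hS : S ∈ activeSets V x) : S.Nonempty := by
  obtain ⟨-, α, -, hα, -⟩ := hS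
  exact Finset.nonempty_of_sum_ne_zero (by rw [hα]; exact one_ne_zero)

theorem activeSets_nonempty {A : Finset 𝔼} {x : 𝔼} (hx : x ∈ convexHull ℝ (A : Set 𝔼)) :
    (activeSets (A : Set 𝔼) x).Nonempty := by
  classical
  obtain ⟨w, hw, hw1, rfl⟩ := Finset.mem_convexHull'.1 hx
  refine ⟨A.filter (fun a => w a ≠ 0), fun a ha => (Finset.mem_filter.1 ha).1, w,
    fun a ha => ?_, ?_, ?_⟩
  · obtain ⟨haA, hwa⟩ := Finset.mem_filter.1 ha
    exact (hw a haA).lt_of_ne' hwa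
  · rw [Finset.sum_filter_ne_zero, hw1]
  · exact (Finset.sum_filter_of_ne (p := fun a => w a ≠ 0)
      fun a _ h h0 => h (by rw [h0, zero_smul])).symm

theorem coe_subset_toExposed_of_mem_activeSets {V D : Set 𝔼} {x : 𝔼} {S : Finset 𝔼}
    {l : StrongDual ℝ 𝔼} (hS : S ∈ activeSets V x) (hVD : V ⊆ D) (hx : x ∈ l.toExposed D) :
    (S : Set 𝔼) ⊆ l.toExposed D := by
  obtain ⟨hSV, α, hα, hα1, hxα⟩ := hS
  intro v hv
  refine ⟨hVD (hSV hv), fun w hw => (hx.2 w hw).trans (not_lt.1 fun hlt => ?_)⟩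
  have hlx : l x = ∑ u ∈ S, α u * l u := by simp [hxα, map_sum, smul_eq_mul]
  have : ∑ u ∈ S, α u * l u < ∑ u ∈ S, α u * l x :=
    Finset.sum_lt_sum (fun u hu => mul_le_mul_of_nonneg_left (hx.2 u (hVD (hSV hu)))
      (hα u hu).le) ⟨v, hv, mul_lt_mul_of_pos_left hlt (hα v hv)⟩
  rw [← Finset.sum_mul, hα1, one_mul, ← hlx] at this
  exact lt_irrefl _ this

theorem sSup_inner_sub_nonneg {V : Set 𝔼} {x : 𝔼} {S : Finset 𝔼} (hS : S ∈ activeSets V x)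
    (u : 𝔼) : 0 ≤ sSup {t | ∃ s ∈ V, ∃ v ∈ (S : Set 𝔼), t = ⟪u, s - v⟫_ℝ} := by
  obtain ⟨v, hv⟩ := nonempty_of_mem_activeSets hS
  exact Real.sSup_nonneg' ⟨0, ⟨v, hS.1 hv, v, hv, by simp⟩, le_rfl⟩

theorem PdirW_nonneg (V : Set 𝔼) (r x : 𝔼) : 0 ≤ PdirW V r x := by
  refine Real.sInf_nonneg ?_
  rintro w ⟨S, hS, rfl⟩
  exact sSup_inner_sub_nonneg hS _

theorem PWidth_nonneg (A : Finset 𝔼) : 0 ≤ PWidth A := by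
  refine Real.sInf_nonneg ?_
  rintro w ⟨K, -, x, -, r, -, -, rfl⟩
  exact PdirW_nonneg _ r x

theorem PdirW_le_of_mem_activeSets {V : Set 𝔼} {r x : 𝔼} {S : Finset 𝔼} {M : ℝ}
    (hS : S ∈ activeSets V x) (hM : ∀ s ∈ V, ∀ v ∈ S, ⟪‖r‖⁻¹ • r, s - v⟫_ℝ ≤ M) :
    PdirW V r x ≤ M := by
  obtain ⟨v, hv⟩ := nonempty_of_mem_activeSets hS
  rw [PdirW]
  refine le_trans (csInf_le ?_ ⟨S, hS, rfl⟩) (csSup_le ⟨_, v, hS.1 hv, v, hv, rfl⟩ ?_)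
  · exact ⟨0, fun w ⟨S', hS', hw⟩ => hw ▸ sSup_inner_sub_nonneg hS' _⟩
  · rintro t ⟨s, hs, v, hv, rfl⟩
    exact hM s hs v hv

theorem PWidth_le_PdirW {A : Finset 𝔼} {K : Set 𝔼} {x r : 𝔼}
    (hK : IsExposed ℝ (convexHull ℝ (A : Set 𝔼)) K) (hx : x ∈ K) (hr : r ≠ 0)
    (hrK : ∃ c : ℝ, 0 ≤ c ∧ ∃ y ∈ K, r = c • (y - x)) :
    PWidth A ≤ PdirW (K ∩ A) r x := by
  refine csInf_le ⟨0, ?_⟩ ⟨K, hK, x, hx, r, hr, hrK, rfl⟩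
  rintro w ⟨K, -, x, -, r, -, -, rfl⟩
  exact PdirW_nonneg _ r x

theorem PWidth_mul_norm_le {A : Finset 𝔼} {K : Set 𝔼} {x r : 𝔼} {S : Finset 𝔼} {M : ℝ}
    (hK : IsExposed ℝ (convexHull ℝ (A : Set 𝔼)) K) (hx : x ∈ K) (hr : r ≠ 0)
    (hrK : ∃ c : ℝ, 0 ≤ c ∧ ∃ y ∈ K, r = c • (y - x)) (hS : S ∈ activeSets (K ∩ A) x)
    (hM : ∀ s ∈ K ∩ A, ∀ v ∈ S, ⟪r, s - v⟫_ℝ ≤ M) :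
    PWidth A * ‖r‖ ≤ M := by
  have hr' : 0 < ‖r‖ := norm_pos_iff.2 hr
  rw [← le_div_iff₀ hr']
  refine (PWidth_le_PdirW hK hx hr hrK).trans (PdirW_le_of_mem_activeSets hS fun s hs v hv => ?_)
  rw [real_inner_smul_left, inv_mul_le_iff₀ hr', mul_div_cancel₀ _ hr'.ne']
  exact hM s hs v hv

theorem PWidth_eq_zero_of_subsingleton {A : Finset 𝔼}
    (hA : (convexHull ℝ (A : Set 𝔼)).Subsingleton) : PWidth A = 0 := by
  rw [PWidth]
  convert Real.sInf_empty
  refine Set.eq_empty_of_forall_notMem ?_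
  rintro w ⟨K, hK, x, hx, r, hr, ⟨c, -, y, hy, rfl⟩, -⟩
  exact hr (by rw [hA (hK.subset hy) (hK.subset hx), sub_self, smul_zero])

theorem PWidth_mul_le_of_mem_activeSets {A S : Finset 𝔼} {x y p : 𝔼}
    (hx : x ∈ convexHull ℝ (A : Set 𝔼)) (hy : y ∈ convexHull ℝ (A : Set 𝔼))
    (hp : ⟪p, y - x⟫_ℝ < 0) (hS : S ∈ activeSets (A : Set 𝔼) x) :
    PWidth A * (-⟪p, y - x⟫_ℝ / ‖y - x‖) ≤
      sSup {u | ∃ v ∈ (S : Set 𝔼), u = ⟪p, v⟫_ℝ} -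
        sInf {u | ∃ v ∈ (A : Set 𝔼), u = ⟪p, v⟫_ℝ} := by
  set D := convexHull ℝ (A : Set 𝔼)
  obtain ⟨r, hrC, hpolar, horth⟩ :=
    (feasibleCone (A : Set 𝔼) x).exists_moreau_decomposition (isClosed_feasibleCone A x) (-p)
  have hpolarD : ∀ w ∈ D, ⟪-p - r, w - x⟫_ℝ ≤ 0 := fun w hw => hpolar _ (sub_mem_feasibleCone hw)
  set K := (innerSL ℝ (-p - r)).toExposed D
  have hK : ∀ {z}, z ∈ K ↔ z ∈ D ∧ ⟪-p - r, z - x⟫_ℝ = 0 := mem_toExposed_innerSL_iff hx hpolarD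
  have hxK : x ∈ K := hK.2 ⟨hx, by simp⟩
  have hdescent : -⟪p, y - x⟫_ℝ ≤ ‖r‖ * ‖y - x‖ := by
    have := hpolarD y hy
    rw [inner_sub_left, inner_neg_left] at this
    linarith [real_inner_le_norm r (y - x)]
  have hr : r ≠ 0 := by
    rintro rfl
    rw [norm_zero, zero_mul] at hdescent
    linarith
  obtain ⟨c, hc, y', hy', hry'⟩ := exists_pos_smul_sub_eq_of_mem_feasibleCone hrC hr
  have hy'K : y' ∈ K := by
    have : c * ⟪-p - r, y' - x⟫_ℝ = 0 := by rw [← real_inner_smul_right, ← hry', horth]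
    exact hK.2 ⟨hy', (mul_eq_zero.1 this).resolve_left hc.ne'⟩
  have hSK : S ∈ activeSets (K ∩ A) x :=
    ⟨fun v hv => ⟨coe_subset_toExposed_of_mem_activeSets hS (subset_convexHull ℝ _) hxK hv,
      hS.1 hv⟩, hS.2⟩
  have hM : ∀ s ∈ K ∩ A, ∀ v ∈ S, ⟪r, s - v⟫_ℝ ≤
      sSup {u | ∃ v ∈ (S : Set 𝔼), u = ⟪p, v⟫_ℝ} -
        sInf {u | ∃ v ∈ (A : Set 𝔼), u = ⟪p, v⟫_ℝ} := by
    rintro s ⟨hsK, hsA⟩ v hv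
    have hs := (hK.1 hsK).2
    have hv' := (hK.1 (hSK.1 hv).1).2
    have hrsv : ⟪r, s - v⟫_ℝ = ⟪p, v⟫_ℝ - ⟪p, s⟫_ℝ := by
      simp only [inner_sub_left, inner_sub_right, inner_neg_left] at hs hv' ⊢
      linarith
    rw [hrsv]
    exact sub_le_sub (S.finite_toSet.apply_le_sSup _ hv) (A.finite_toSet.sInf_le_apply _ hsA)
  calc PWidth A * (-⟪p, y - x⟫_ℝ / ‖y - x‖) ≤ PWidth A * ‖r‖ :=
        mul_le_mul_of_nonneg_left (div_le_of_le_mul₀ (norm_nonneg _) (norm_nonneg _) hdescent)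
          (PWidth_nonneg A)
    _ ≤ _ := PWidth_mul_norm_le ContinuousLinearMap.toExposed.isExposed hxK hr
        ⟨c, hc.le, y', hy'K, hry'⟩ hSK hM

theorem PWidth_mul_le_gap {A : Finset 𝔼} {x y p : 𝔼}
    (hx : x ∈ convexHull ℝ (A : Set 𝔼)) (hy : y ∈ convexHull ℝ (A : Set 𝔼))
    (hp : ⟪p, y - x⟫_ℝ < 0) :
    PWidth A * (-⟪p, y - x⟫_ℝ / ‖y - x‖) ≤
      sInf {t | ∃ S ∈ activeSets (A : Set 𝔼) x, t = sSup {u | ∃ v ∈ (S : Set 𝔼), u = ⟪p, v⟫_ℝ}} -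
        sInf {u | ∃ v ∈ (A : Set 𝔼), u = ⟪p, v⟫_ℝ} := by
  obtain ⟨S, hS⟩ := activeSets_nonempty hx
  rw [le_sub_iff_add_le]
  refine le_csInf ⟨_, S, hS, rfl⟩ ?_
  rintro t ⟨S, hS, rfl⟩
  exact le_sub_iff_add_le.1 (PWidth_mul_le_of_mem_activeSets hx hy hp hS)

end Polytope

theorem stmt14_general (d : ℕ) (μ : ℝ) (hμ : 0 ≤ μ)
    (f : EuclideanSpace ℝ (Fin d) → ℝ)
    (f' : EuclideanSpace ℝ (Fin d) → EuclideanSpace ℝ (Fin d))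
    (A : Finset (EuclideanSpace ℝ (Fin d)))
    (hsc : ∀ x ∈ convexHull ℝ (↑A : Set (EuclideanSpace ℝ (Fin d))),
      ∀ y ∈ convexHull ℝ (↑A : Set (EuclideanSpace ℝ (Fin d))),
        f y ≥ f x + ⟪f' x, y - x⟫_ℝ + μ / 2 * ‖y - x‖ ^ 2) :
    μ * PWidth A ^ 2 ≤ mufA f f' A := by
  by_cases hdesc : ∃ x ∈ convexHull ℝ (↑A : Set (EuclideanSpace ℝ (Fin d))),
      ∃ y ∈ convexHull ℝ (↑A : Set (EuclideanSpace ℝ (Fin d))), ⟪f' x, y - x⟫_ℝ < 0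
  · obtain ⟨x, hx, y, hy, hxy⟩ := hdesc
    refine le_csInf ⟨_, x, hx, y, hy, hxy, rfl⟩ ?_
    rintro c ⟨x, hx, y, hy, hxy, rfl⟩
    have hyx : 0 < ‖y - x‖ := norm_pos_iff.2 fun h => by simp [h] at hxy
    rw [gammaA, inner_neg_left]
    exact mul_sq_le_two_div_sq_mul hμ (PWidth_nonneg A) (neg_pos.2 hxy) hyx
      (PWidth_mul_le_gap hx hy hxy) (by linarith [hsc x hx y hy])
  · push Not at hdesc
    -- with no descent direction, `mufA` is the junk value `sInf ∅ = 0`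
    have hmuf : mufA f f' A = 0 := by
      rw [mufA]
      convert Real.sInf_empty
      exact Set.eq_empty_of_forall_notMem fun c ⟨x, hx, y, hy, hxy, _⟩ =>
        (hdesc x hx y hy).not_gt hxy
    rcases hμ.eq_or_lt with rfl | hμ
    · simp [hmuf]
    · rw [hmuf, PWidth_eq_zero_of_subsingleton (.of_stronglyConvex_of_inner_nonneg hμ hsc hdesc)]
      simp

/-- If `f` is `μ`-strongly convex (w.r.t. the Euclidean norm) over `D = conv(A)`, then the
geometric strong convexity constant satisfies `μ_f^A ≥ μ · PWidth(A)²`. -/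
theorem stmt14 (d : ℕ) (μ : ℝ) (hμ : 0 ≤ μ)
    (f : EuclideanSpace ℝ (Fin d) → ℝ)
    (f' : EuclideanSpace ℝ (Fin d) → EuclideanSpace ℝ (Fin d))
    (A : Finset (EuclideanSpace ℝ (Fin d))) (hA : A.Nonempty)
    (hdiff : ∀ x, HasGradientAt f (f' x) x)
    (hsc : ∀ x ∈ convexHull ℝ (↑A : Set (EuclideanSpace ℝ (Fin d))),
      ∀ y ∈ convexHull ℝ (↑A : Set (EuclideanSpace ℝ (Fin d))),
        f y ≥ f x + ⟪f' x, y - x⟫_ℝ + μ / 2 * ‖y - x‖ ^ 2) :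
    μ * PWidth A ^ 2 ≤ mufA f f' A :=
  stmt14_general d μ hμ f f' A hsc
end

section
/- Suppose nonnegative reals h_t, g_t and a constant C > 0 satisfy h_t − h_{t+1} ≥ γ·(g_t/2) − (γ²/2)·C for all γ ∈ [0,1], and g_t ≥ h_t. If g_t ≤ 2C then choosing γ = g_t/(2C) gives h_t − h_{t+1} ≥ g_t²/(8C); if additionally h_t ≤ g_t²/(2μ) for some μ > 0, then h_{t+1} ≤ (1 − μ/(4C))·h_t. If instead g_t > 2C, then choosing γ = 1 gives h_{t+1} ≤ (3/4)·h_t. -/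
/-!
The progress bound `γ g/2 - γ² C/2` is a concave quadratic in `γ`, maximised at `γ = g/(2C)`.
When this step is admissible it guarantees progress `g²/(8C)`, and the error bound
`h ≤ g²/(2μ)` turns that into a fixed fraction `μ/(4C)` of `h`. Otherwise the full step
`γ = 1` gives progress `g/2 - C/2 > g/4 ≥ h/4`.
-/

section FrankWolfeStep

variable {h h' g C : ℝ}

lemma sq_div_le_of_progress_bound (hC : 0 < C) (hg0 : 0 ≤ g) (hle : g ≤ 2 * C)
    (hprog : ∀ γ : ℝ, 0 ≤ γ → γ ≤ 1 → h - h' ≥ γ * (g / 2) - γ ^ 2 / 2 * C) :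
    g ^ 2 / (8 * C) ≤ h - h' := by
  have hγ0 : 0 ≤ g / (2 * C) := by positivity
  have hγ1 : g / (2 * C) ≤ 1 := (div_le_one (by positivity)).mpr hle
  calc g ^ 2 / (8 * C) = g / (2 * C) * (g / 2) - (g / (2 * C)) ^ 2 / 2 * C := by
        field_simp; ring
    _ ≤ h - h' := hprog _ hγ0 hγ1

lemma le_one_sub_mul_of_sq_div_le {μ : ℝ} (hC : 0 < C) (hμ : 0 < μ)
    (hprogress : g ^ 2 / (8 * C) ≤ h - h') (herr : h ≤ g ^ 2 / (2 * μ)) :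
    h' ≤ (1 - μ / (4 * C)) * h := by
  have hsq : 2 * μ * h ≤ g ^ 2 := by rwa [le_div_iff₀' (by positivity)] at herr
  have hdecrease : μ * h / (4 * C) ≤ h - h' := by
    calc μ * h / (4 * C) = 2 * μ * h / (8 * C) := by field_simp; ring
      _ ≤ g ^ 2 / (8 * C) := by gcongr
      _ ≤ h - h' := hprogress
  calc h' ≤ h - μ * h / (4 * C) := by linarith
    _ = (1 - μ / (4 * C)) * h := by ring

lemma le_three_quarters_mul_of_full_step (hfull : g / 2 - C / 2 ≤ h - h')
    (hgt : 2 * C < g) (hgh : h ≤ g) :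
    h' ≤ 3 / 4 * h := by
  linarith

end FrankWolfeStep

theorem stmt15_general (h h' g C : ℝ) (hC : 0 < C) (hg0 : 0 ≤ g)
    (hprog : ∀ γ : ℝ, 0 ≤ γ → γ ≤ 1 → h - h' ≥ γ * (g / 2) - γ ^ 2 / 2 * C)
    (hgh : h ≤ g) :
    (g ≤ 2 * C → h - h' ≥ g ^ 2 / (8 * C)) ∧
    (g ≤ 2 * C → ∀ μ : ℝ, 0 < μ → h ≤ g ^ 2 / (2 * μ) → h' ≤ (1 - μ / (4 * C)) * h) ∧
    (g > 2 * C → h' ≤ 3 / 4 * h) :=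
  ⟨fun hle => sq_div_le_of_progress_bound hC hg0 hle hprog,
    fun hle _ hμ herr =>
      le_one_sub_mul_of_sq_div_le hC hμ (sq_div_le_of_progress_bound hC hg0 hle hprog) herr,
    fun hgt =>
      le_three_quarters_mul_of_full_step (by linarith [hprog 1 zero_le_one le_rfl]) hgt hgh⟩

/-- Single-step progress computation for away-steps Frank–Wolfe: from the progress bound
`h - h' ≥ γ(g/2) - (γ²/2)C` for `γ ∈ [0,1]` and `g ≥ h`: if `g ≤ 2C` then `γ = g/(2C)`
gives `h - h' ≥ g²/(8C)`, and if additionally `h ≤ g²/(2μ)` then `h' ≤ (1 - μ/(4C))h`;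
if instead `g > 2C`, then `γ = 1` gives `h' ≤ (3/4)h`. -/
theorem stmt15 (h h' g C : ℝ) (hC : 0 < C) (hh : 0 ≤ h) (hh' : 0 ≤ h') (hg0 : 0 ≤ g)
    (hprog : ∀ γ : ℝ, 0 ≤ γ → γ ≤ 1 → h - h' ≥ γ * (g / 2) - γ ^ 2 / 2 * C)
    (hgh : h ≤ g) :
    (g ≤ 2 * C → h - h' ≥ g ^ 2 / (8 * C)) ∧
    (g ≤ 2 * C → ∀ μ : ℝ, 0 < μ → h ≤ g ^ 2 / (2 * μ) → h' ≤ (1 - μ / (4 * C)) * h) ∧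
    (g > 2 * C → h' ≤ 3 / 4 * h) :=
  stmt15_general h h' g C hC hg0 hprog hgh
end

section
/- Suppose a nonnegative sequence (h_k) satisfies h_{k+1} ≤ h_k − min{h_k/2, h_k²/(8C)} for all k ≥ 0 and some C > 0, with h_0 arbitrary. Then h_k ≤ 4(2C + h_0)/(k+4) for all k ≥ 1. -/
lemma aux17 (B x t : ℝ) (hB : 0 < B) (hx : 0 ≤ x) (ht : 5 ≤ t) (hxt : x * t ≤ 4 * B) :
    (4 * B * x - x ^ 2) * (t + 1) ≤ 16 * B ^ 2 := by
  nlinarith [sq_nonneg (4 * B - x * t), mul_nonneg (mul_nonneg hB.le (by linarith : (0:ℝ) ≤ 4 * B - x * t)) (by linarith : (0:ℝ) ≤ t - 2), sq_nonneg t, mul_pos hB hB, sq_nonneg (x * t - 4 * B), mul_nonneg hx (by linarith : (0:ℝ) ≤ t)]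

/-- Sublinear `O(1/k)` convergence recurrence: if `h_{k+1} ≤ h_k - min(h_k/2, h_k²/(8C))`
with `h_k ≥ 0` and `C > 0`, then `h_k ≤ 4(2C + h_0)/(k + 4)` for all `k ≥ 1`. -/
theorem stmt17 (h : ℕ → ℝ) (C : ℝ) (hC : 0 < C) (hnn : ∀ k, 0 ≤ h k)
    (hrec : ∀ k, h (k + 1) ≤ h k - min (h k / 2) (h k ^ 2 / (8 * C))) :
    ∀ k : ℕ, 1 ≤ k → h k ≤ 4 * (2 * C + h 0) / ((k : ℝ) + 4) := by
  have h00 := hnn 0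
  have hB : (0:ℝ) < 2 * C + h 0 := by linarith
  intro k hk
  induction k with
  | zero => omega
  | succ n ih =>
    rcases Nat.lt_or_ge n 1 with hn0 | hn1
    · -- base case n = 0
      have hn0' : n = 0 := by omega
      subst hn0'
      have hr := hrec 0
      push_cast
      rw [le_div_iff₀ (by norm_num)]
      rcases le_or_gt (h 0) (8 * C) with hc | hc
      · have hm : (0:ℝ) ≤ min (h 0 / 2) (h 0 ^ 2 / (8 * C)) :=
          le_min (by linarith) (by positivity)
        nlinarith
      · have hm : h 0 / 2 ≤ min (h 0 / 2) (h 0 ^ 2 / (8 * C)) := by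
          refine le_min le_rfl ?_
          rw [div_le_div_iff₀ (by norm_num) (by linarith)]
          nlinarith
        nlinarith
    · have ha := ih hn1
      rw [le_div_iff₀ (by positivity)] at ha
      have hr := hrec n
      have hncast : (1:ℝ) ≤ (n:ℝ) := by exact_mod_cast hn1
      push_cast
      rw [le_div_iff₀ (by positivity)]
      rcases le_or_gt (4 * C) (h n) with hc | hc
      · -- large case: min = h n / 2
        have hm : h n / 2 ≤ min (h n / 2) (h n ^ 2 / (8 * C)) := by
          refine le_min le_rfl ?_
          rw [div_le_div_iff₀ (by norm_num) (by linarith)]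
          nlinarith [hnn n]
        have h1 : h (n + 1) ≤ h n / 2 := by linarith
        nlinarith [mul_nonneg (by linarith : (0:ℝ) ≤ (n:ℝ) + 5) (by linarith : (0:ℝ) ≤ h n / 2 - h (n+1)),
          mul_nonneg (hnn n) (by linarith : (0:ℝ) ≤ (n:ℝ) - 1)]
      · -- small case: min = h n ^ 2 / (8 C)
        have hm : h n ^ 2 / (8 * C) ≤ min (h n / 2) (h n ^ 2 / (8 * C)) := by
          refine le_min ?_ le_rfl
          rw [div_le_div_iff₀ (by linarith) (by norm_num)]
          nlinarith [hnn n]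
        have h1 : h (n + 1) ≤ h n - h n ^ 2 / (8 * C) := by linarith
        have h2 : h n ^ 2 / (4 * (2 * C + h 0)) ≤ h n ^ 2 / (8 * C) :=
          div_le_div_of_nonneg_left (sq_nonneg _) (by linarith) (by linarith)
        have h3 : h (n + 1) ≤ h n - h n ^ 2 / (4 * (2 * C + h 0)) := by linarith
        have key := aux17 (2 * C + h 0) (h n) ((n:ℝ) + 4) hB (hnn n) (by linarith)
          (by linarith)
        have h4 : h n - h n ^ 2 / (4 * (2 * C + h 0)) =
            (4 * (2 * C + h 0) * h n - h n ^ 2) / (4 * (2 * C + h 0)) := by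
          field_simp
        have h5 : (4 * (2 * C + h 0) * h n - h n ^ 2) / (4 * (2 * C + h 0)) * ((n:ℝ) + 1 + 4)
            ≤ 4 * (2 * C + h 0) := by
          rw [div_mul_eq_mul_div, div_le_iff₀ (by positivity)]
          nlinarith [key]
        calc h (n + 1) * ((n:ℝ) + 1 + 4)
            ≤ (4 * (2 * C + h 0) * h n - h n ^ 2) / (4 * (2 * C + h 0)) * ((n:ℝ) + 1 + 4) := by
              apply mul_le_mul_of_nonneg_right (by rw [← h4]; exact h3) (by linarith)
          _ ≤ 4 * (2 * C + h 0) := h5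
end

section
/- Let d = 2k with k ≥ 1. On the unit cube [0,1]^d, let r ∈ ℝ^d have r_i = −1 for 1 ≤ i ≤ k and r_i = −ε for k+1 ≤ i ≤ d with ε > 0, and let s = 0 be the cube vertex maximizing ⟨r, ·⟩. Let v be any vertex with exactly one nonzero coordinate among the first k coordinates and all of the last k coordinates equal to 1. Then ⟨r/‖r‖, (s − v)/‖s − v‖⟩ = (1 + kε)/(√k·√(1+ε²)·√(k+1)), which is at most 1/k for ε small enough. -/
/-!
The coordinates split into the blocks `i < k` and `k ≤ i`: `r ε` is constant on each block and
`v` is `1` on one index of the first block and on all of the second, so `‖r ε‖² = k (1 + ε²)`,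
`‖v‖² = k + 1` and `⟪r ε, v⟫ = -(1 + k ε)`. The vertex `0` maximizes `⟪r ε, ·⟫` because `r ε` is
entrywise nonpositive. For the bound, `√(1 + ε²) ≥ 1` reduces it to `k (1 + k ε) ≤ √(k (k + 1))`,
which holds once `ε ≤ 1 / (3 k²)`.
-/
open scoped InnerProductSpace
open Finset

section BlockVectors

variable {ι : Type*} [Fintype ι]

theorem EuclideanSpace.real_inner_eq_sum (x y : EuclideanSpace ℝ ι) :
    ⟪x, y⟫_ℝ = ∑ i, x i * y i := by
  simp [PiLp.inner_apply, mul_comm]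

theorem EuclideanSpace.real_inner_nonpos_of_nonpos_of_nonneg {x w : EuclideanSpace ℝ ι}
    (hx : ∀ i, x i ≤ 0) (hw : ∀ i, 0 ≤ w i) : ⟪x, w⟫_ℝ ≤ 0 := by
  rw [EuclideanSpace.real_inner_eq_sum]
  exact sum_nonpos fun i _ => mul_nonpos_of_nonpos_of_nonneg (hx i) (hw i)

variable (p : ι → Prop) [DecidablePred p]

theorem EuclideanSpace.norm_sq_of_apply_eq_ite {x : EuclideanSpace ℝ ι} {a b : ℝ}
    (hx : ∀ i, x i = if p i then a else b) :
    ‖x‖ ^ 2 = #{i | p i} * a ^ 2 + #{i | ¬p i} * b ^ 2 := by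
  simp only [EuclideanSpace.real_norm_sq_eq, hx, apply_ite (· ^ 2), sum_ite, sum_const,
    nsmul_eq_mul]

theorem EuclideanSpace.real_inner_eq_apply_add_sum_filter_not {x v : EuclideanSpace ℝ ι} {i₀ : ι}
    (hi₀ : p i₀) (hv₀ : v i₀ = 1) (hvp : ∀ i, p i → i ≠ i₀ → v i = 0)
    (hvnp : ∀ i, ¬p i → v i = 1) :
    ⟪x, v⟫_ℝ = x i₀ + ∑ i with ¬p i, x i := by
  rw [EuclideanSpace.real_inner_eq_sum, ← sum_filter_add_sum_filter_not univ p,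
    sum_eq_single_of_mem i₀ (by simpa using hi₀), hv₀, mul_one]
  · congr 1
    exact sum_congr rfl fun i hi => by rw [hvnp i (mem_filter.mp hi).2, mul_one]
  · intro i hi hne
    rw [hvp i (mem_filter.mp hi).2 hne, mul_zero]

end BlockVectors

theorem real_inner_inv_norm_smul_neg {E : Type*} [NormedAddCommGroup E] [InnerProductSpace ℝ E]
    (x v : E) : ⟪‖x‖⁻¹ • x, ‖-v‖⁻¹ • -v⟫_ℝ = -⟪x, v⟫_ℝ / (‖x‖ * ‖v‖) := by
  rw [real_inner_smul_left, real_inner_smul_right, norm_neg, inner_neg_right]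
  field_simp

theorem one_add_mul_div_sqrt_le_inv {k ε : ℝ} (hk : 1 ≤ k) (hε : 0 ≤ ε)
    (hε₀ : ε ≤ 1 / (3 * k ^ 2)) :
    (1 + k * ε) / (√k * √(1 + ε ^ 2) * √(k + 1)) ≤ 1 / k := by
  have hk₀ : 0 < k := by linarith
  have hkε : 3 * k * (k * ε) ≤ 1 := by
    rw [le_div_iff₀ (by positivity)] at hε₀; linarith
  have hsq : ((1 + k * ε) * k) ^ 2 ≤ k * (k + 1) := by
    have hu : 0 ≤ k * (k * ε) := by positivity
    nlinarith [mul_nonneg hk₀.le (sub_nonneg.mpr hkε), mul_nonneg hu (sub_nonneg.mpr hkε)]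
  rw [div_le_div_iff₀ (by positivity) hk₀, one_mul]
  calc (1 + k * ε) * k ≤ √(k * (k + 1)) := Real.le_sqrt_of_sq_le hsq
    _ = √k * 1 * √(k + 1) := by rw [Real.sqrt_mul hk₀.le, mul_one]
    _ ≤ √k * √(1 + ε ^ 2) * √(k + 1) := by
      gcongr; exact Real.one_le_sqrt.mpr (by nlinarith)

theorem Fin.card_filter_val_lt_two_mul (k : ℕ) : #{i : Fin (2 * k) | (i : ℕ) < k} = k := by
  rw [Fin.card_filter_val_lt]
  omega

theorem Fin.card_filter_not_val_lt_two_mul (k : ℕ) : #{i : Fin (2 * k) | ¬(i : ℕ) < k} = k := by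
  rw [filter_not, card_sdiff_of_subset (filter_subset _ _), Fin.card_filter_val_lt, card_univ,
    Fintype.card_fin]
  omega

/-- Obtuse-pyramid computation on the unit cube (d = 2k): with `r_i = -1` for `i < k`,
`r_i = -ε` for `i ≥ k`, `s = 0` the maximizing vertex, and `v` a vertex with exactly one
nonzero among the first `k` coordinates and all of the last `k` coordinates equal to `1`,
`⟨r/‖r‖, (s-v)/‖s-v‖⟩ = (1 + kε)/(√k·√(1+ε²)·√(k+1))`, which is at most `1/k` for `ε`
small enough. -/
theorem stmt18 (k : ℕ) (hk : 1 ≤ k)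
    (r : ℝ → EuclideanSpace ℝ (Fin (2 * k)))
    (hr : ∀ (ε : ℝ) (i : Fin (2 * k)), r ε i = if (i : ℕ) < k then -1 else -ε)
    (v : EuclideanSpace ℝ (Fin (2 * k)))
    (hv1 : ∀ i : Fin (2 * k), k ≤ (i : ℕ) → v i = 1)
    (hv2 : ∃ i0 : Fin (2 * k), (i0 : ℕ) < k ∧ v i0 = 1 ∧
      ∀ i : Fin (2 * k), (i : ℕ) < k → i ≠ i0 → v i = 0) :
    (∀ ε : ℝ, 0 < ε →
      (∀ w : EuclideanSpace ℝ (Fin (2 * k)), (∀ i, w i = 0 ∨ w i = 1) →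
        ⟪r ε, w⟫_ℝ ≤ ⟪r ε, (0 : EuclideanSpace ℝ (Fin (2 * k)))⟫_ℝ) ∧
      ⟪‖r ε‖⁻¹ • r ε, ‖(0 : EuclideanSpace ℝ (Fin (2 * k))) - v‖⁻¹ •
          ((0 : EuclideanSpace ℝ (Fin (2 * k))) - v)⟫_ℝ =
        (1 + k * ε) / (Real.sqrt k * Real.sqrt (1 + ε ^ 2) * Real.sqrt (k + 1))) ∧
    ∃ ε0 : ℝ, 0 < ε0 ∧ ∀ ε : ℝ, 0 < ε → ε ≤ ε0 →
      (1 + k * ε) / (Real.sqrt k * Real.sqrt (1 + ε ^ 2) * Real.sqrt (k + 1)) ≤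
        1 / (k : ℝ) := by
  obtain ⟨i₀, hi₀, hv₀, hvp⟩ := hv2
  have hvnp : ∀ i : Fin (2 * k), ¬(i : ℕ) < k → v i = 1 := fun i hi => hv1 i (not_lt.mp hi)
  have hcard_lt : (#{i : Fin (2 * k) | (i : ℕ) < k} : ℝ) = k := by
    exact_mod_cast Fin.card_filter_val_lt_two_mul k
  have hcard_ge : (#{i : Fin (2 * k) | ¬(i : ℕ) < k} : ℝ) = k := by
    exact_mod_cast Fin.card_filter_not_val_lt_two_mul k
  have hinner_v (x : EuclideanSpace ℝ (Fin (2 * k))) :=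
    EuclideanSpace.real_inner_eq_apply_add_sum_filter_not (fun i : Fin (2 * k) => (i : ℕ) < k)
      (x := x) hi₀ hv₀ hvp hvnp
  have hv_norm : ‖v‖ = √(k + 1) := by
    rw [← Real.sqrt_sq (norm_nonneg v), ← real_inner_self_eq_norm_sq, hinner_v,
      sum_eq_card_nsmul fun i hi => hvnp i (mem_filter.mp hi).2, hv₀, nsmul_one, hcard_ge, add_comm]
  refine ⟨fun ε hε => ⟨fun w hw => ?_, ?_⟩, ⟨1 / (3 * k ^ 2), by positivity,
    fun ε hε hε₀ => one_add_mul_div_sqrt_le_inv (by exact_mod_cast hk) hε.le hε₀⟩⟩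
  · rw [inner_zero_right]
    refine EuclideanSpace.real_inner_nonpos_of_nonpos_of_nonneg (fun i => ?_) fun i => ?_
    · rw [hr]; split_ifs <;> linarith
    · rcases hw i with h | h <;> simp [h]
  · have hr_norm : ‖r ε‖ = √k * √(1 + ε ^ 2) := by
      rw [← Real.sqrt_mul (Nat.cast_nonneg k), ← Real.sqrt_sq (norm_nonneg (r ε)),
        EuclideanSpace.norm_sq_of_apply_eq_ite _ (hr ε), hcard_lt, hcard_ge]
      ring_nf
    have hinner : ⟪r ε, v⟫_ℝ = -(1 + k * ε) := by
      rw [hinner_v, sum_eq_card_nsmul fun i hi => (hr ε i).trans (if_neg (mem_filter.mp hi).2),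
        hr, if_pos hi₀, nsmul_eq_mul, hcard_ge]
      ring
    rw [zero_sub, real_inner_inv_norm_smul_neg, hinner, neg_neg, hr_norm, hv_norm]
end
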